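/- arXiv:2301.07467 — 5 statements merged into one kernel-verified Lean document; each statement's English description precedes it below -/
import Mathlib

section
/- For every graph G with average degree d and every 0 < α < α' < 1, the crux functions satisfy c_α(G) ≤ ⌈(α/α')·(c_{α'}(G) − 1) + 1⌉. -/
open scoped Classical

noncomputable section

namespace HamSubsets

open SimpleGraph

variable {V : Type*}

/-- The average degree `2e(G)/|V(G)|` of a graph. -/
noncomputable def avgDeg (G : SimpleGraph V) [Fintype V] : ℝ :=
  2 * G.edgeSet.ncard / Fintype.card V

/-- The average degree of a subgraph. -/
noncomputable def subAvgDeg {G : SimpleGraph V} (H : G.Subgraph) : ℝ :=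
  2 * H.edgeSet.ncard / H.verts.ncard

/-- The `α`-crux function: the minimum order of a subgraph whose average degree is at
least `α` times the average degree of `G`. -/
noncomputable def crux (G : SimpleGraph V) [Fintype V] (a : ℝ) : ℕ :=
  sInf {n : ℕ | ∃ H : G.Subgraph, H.verts.Nonempty ∧
    a * avgDeg G ≤ subAvgDeg H ∧ H.verts.ncard = n}

/-- `A` is a Hamiltonian subset of `G` if the induced subgraph `G[A]` contains a
Hamiltonian cycle. -/
def IsHamSubset (G : SimpleGraph V) (A : Finset V) : Prop :=
  ∃ (u : (A : Set V)) (p : (G.induce (A : Set V)).Walk u u), p.IsHamiltonianCycle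

/-- `h(G)`, the number of Hamiltonian subsets of `G`. -/
noncomputable def hamCount (G : SimpleGraph V) [Fintype V] : ℕ :=
  Set.ncard {A : Finset V | IsHamSubset G A}

/-- The number of Hamiltonian subsets of `G` containing the vertex `v`. -/
noncomputable def hamCountAt (G : SimpleGraph V) [Fintype V] (v : V) : ℕ :=
  Set.ncard {A : Finset V | v ∈ A ∧ IsHamSubset G A}

/-- The external neighbourhood of a vertex set. -/
def extNbhd (G : SimpleGraph V) (X : Set V) : Set V :=
  {v | v ∉ X ∧ ∃ u ∈ X, G.Adj u v}

/-- The function `ε(x, ε₁, k)` of Komlós and Szemerédi. -/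
noncomputable def epsFun (e1 k x : ℝ) : ℝ :=
  if x < k / 5 then 0 else e1 / (Real.log (15 * x / k)) ^ 2

/-- `G` is an `(ε₁, k)`-expander. -/
def IsExpander (G : SimpleGraph V) [Fintype V] (e1 k : ℝ) : Prop :=
  ∀ X : Set V, k / 2 ≤ (X.ncard : ℝ) → (X.ncard : ℝ) ≤ (Fintype.card V : ℝ) / 2 →
    epsFun e1 k (X.ncard : ℝ) * (X.ncard : ℝ) ≤ ((extNbhd G X).ncard : ℝ)

/-- `G` is an `(n,d,λ)`-graph: a `d`-regular graph on `n` vertices all of whose adjacency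
eigenvalues with eigenvector orthogonal to the all-ones vector are at most `lam` in
absolute value. -/
def IsNDL (G : SimpleGraph V) [Fintype V] (n d : ℕ) (lam : ℝ) : Prop :=
  Fintype.card V = n ∧ G.IsRegularOfDegree d ∧
    ∀ (μ : ℝ) (f : V → ℝ), f ≠ 0 → (∑ v, f v) = 0 →
      (∀ v, (∑ u, if G.Adj v u then f u else 0) = μ * f v) → |μ| ≤ lam

/-- `G` is a `β`-graph: any two disjoint vertex sets of size more than `β n` are joined
by an edge. -/
def IsBetaGraph (G : SimpleGraph V) [Fintype V] (β : ℝ) : Prop :=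
  ∀ A B : Finset V, Disjoint A B → β * (Fintype.card V : ℝ) < (A.card : ℝ) →
    β * (Fintype.card V : ℝ) < (B.card : ℝ) → ∃ a ∈ A, ∃ b ∈ B, G.Adj a b

/-- The ball of radius `r` around `v`: vertices reachable from `v` by a walk of length
at most `r`. -/
def ball (G : SimpleGraph V) (v : V) (r : ℕ) : Set V :=
  {u | ∃ w : G.Walk v u, w.length ≤ r}

/-- The data of an `ℓ`-chain inside `G`: cycles `C 0, …, C (ℓ-1)`, pairwise
vertex-disjoint, where consecutive cycles `C i` and `C (i+1)` are joined by a path `P i`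
of positive length from `a i ∈ C i` to `b i ∈ C (i+1)`; the paths are pairwise
vertex-disjoint and meet the cycles only in their endpoints. -/
def IsChainDecomp (G : SimpleGraph V) (ℓ : ℕ) (x a b : ℕ → V)
    (C : ∀ i, G.Walk (x i) (x i)) (P : ∀ i, G.Walk (a i) (b i)) : Prop :=
  (∀ i < ℓ, (C i).IsCycle) ∧
  (∀ i, i + 1 < ℓ → (P i).IsPath ∧ 1 ≤ (P i).length ∧
      a i ∈ (C i).support ∧ b i ∈ (C (i + 1)).support) ∧
  (∀ i < ℓ, ∀ j < ℓ, i ≠ j → ∀ v ∈ (C i).support, v ∉ (C j).support) ∧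
  (∀ i j, i + 1 < ℓ → j + 1 < ℓ → i ≠ j → ∀ v ∈ (P i).support, v ∉ (P j).support) ∧
  (∀ i j, i + 1 < ℓ → j < ℓ → ∀ v ∈ (P i).support, v ∈ (C j).support → v = a i ∨ v = b i)

/-- The data of an `ℓ`-wheel inside `G`: as for a chain, but arranged cyclically, the
path `P i` joining `a i ∈ C i` to `b i ∈ C ((i+1) % ℓ)`, with for each cycle the incoming
and outgoing attachment vertices distinct. -/
def IsWheelDecomp (G : SimpleGraph V) (ℓ : ℕ) (x a b : ℕ → V)
    (C : ∀ i, G.Walk (x i) (x i)) (P : ∀ i, G.Walk (a i) (b i)) : Prop :=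
  (∀ i < ℓ, (C i).IsCycle) ∧
  (∀ i < ℓ, (P i).IsPath ∧ 1 ≤ (P i).length ∧
      a i ∈ (C i).support ∧ b i ∈ (C ((i + 1) % ℓ)).support ∧ b i ≠ a ((i + 1) % ℓ)) ∧
  (∀ i < ℓ, ∀ j < ℓ, i ≠ j → ∀ v ∈ (C i).support, v ∉ (C j).support) ∧
  (∀ i < ℓ, ∀ j < ℓ, i ≠ j → ∀ v ∈ (P i).support, v ∉ (P j).support) ∧
  (∀ i < ℓ, ∀ j < ℓ, ∀ v ∈ (P i).support, v ∈ (C j).support → v = a i ∨ v = b i)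

/-- `G` contains an `ℓ`-wheel as a subgraph. -/
def ContainsWheel (G : SimpleGraph V) (ℓ : ℕ) : Prop :=
  ∃ (x a b : ℕ → V) (C : ∀ i, G.Walk (x i) (x i)) (P : ∀ i, G.Walk (a i) (b i)),
    IsWheelDecomp G ℓ x a b C P

/-- `G` is (exactly) an `ℓ`-wheel: it has an `ℓ`-wheel decomposition covering all of its
vertices and edges. -/
def IsWheelGraph (G : SimpleGraph V) (ℓ : ℕ) : Prop :=
  ∃ (x a b : ℕ → V) (C : ∀ i, G.Walk (x i) (x i)) (P : ∀ i, G.Walk (a i) (b i)),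
    IsWheelDecomp G ℓ x a b C P ∧
    (∀ v : V, ∃ i < ℓ, v ∈ (C i).support ∨ v ∈ (P i).support) ∧
    (∀ e ∈ G.edgeSet, ∃ i < ℓ, e ∈ (C i).edges ∨ e ∈ (P i).edges)

section AuxCount
open Finset

lemma choose_identity (a b : ℕ) :
    (a+2).choose (b+2) * ((b+2)*(b+1)) = ((a+2)*(a+1)) * a.choose b := by
  have h1 := Nat.add_one_mul_choose_eq (a+1) (b+1)
  have h2 := Nat.add_one_mul_choose_eq a b
  calc (a+2).choose (b+2) * ((b+2)*(b+1))
      = ((a+2).choose (b+2) * (b+2)) * (b+1) := by ring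
    _ = ((a+1+1) * (a+1).choose (b+1)) * (b+1) := by rw [← h1]
    _ = (a+2) * ((a+1).choose (b+1) * (b+1)) := by ring
    _ = (a+2) * ((a+1) * a.choose b) := by rw [← h2]
    _ = ((a+2)*(a+1)) * a.choose b := by ring

lemma card_pair_filter {V : Type*} [DecidableEq V] (T : Finset V) (s : ℕ)
    (hs2 : 2 ≤ s) (u v : V) (huv : u ≠ v) (hu : u ∈ T) (hv : v ∈ T) :
    ((T.powersetCard s).filter (fun S => u ∈ S ∧ v ∈ S)).card
      = (T.card - 2).choose (s - 2) := by
  have hpair : ({u, v} : Finset V) ⊆ T := by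
    intro x hx; simp only [mem_insert, mem_singleton] at hx; rcases hx with rfl | rfl <;> assumption
  have hpc : ({u, v} : Finset V).card = 2 := by rw [card_insert_of_notMem (by simpa), card_singleton]
  have hTc : (T \ {u, v}).card = T.card - 2 := by rw [card_sdiff_of_subset hpair, hpc]
  rw [← hTc, ← Finset.card_powersetCard]
  refine Finset.card_bij' (fun S _ => S \ {u, v}) (fun S _ => S ∪ {u, v}) ?_ ?_ ?_ ?_
  · intro S hS
    simp only [mem_filter, mem_powersetCard] at hS
    obtain ⟨⟨hST, hcard⟩, hu', hv'⟩ := hS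
    have hsub : ({u, v} : Finset V) ⊆ S := by
      intro x hx; simp only [mem_insert, mem_singleton] at hx; rcases hx with rfl | rfl <;> assumption
    rw [mem_powersetCard]
    constructor
    · exact sdiff_subset_sdiff hST le_rfl
    · rw [card_sdiff_of_subset hsub, hpc, hcard]
  · intro S hS
    rw [mem_powersetCard] at hS
    obtain ⟨hST, hcard⟩ := hS
    have hdisj : Disjoint S ({u, v} : Finset V) :=
      disjoint_of_subset_left hST sdiff_disjoint
    simp only [mem_filter, mem_powersetCard]
    refine ⟨⟨?_, ?_⟩, ?_, ?_⟩
    · exact union_subset (hST.trans sdiff_subset) hpair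
    · rw [card_union_of_disjoint hdisj, hcard, hpc]; omega
    · simp
    · simp
  · intro S hS
    simp only [mem_filter, mem_powersetCard] at hS
    have hsub : ({u, v} : Finset V) ⊆ S := by
      intro x hx; simp only [mem_insert, mem_singleton] at hx
      rcases hx with rfl | rfl; exacts [hS.2.1, hS.2.2]
    exact sdiff_union_of_subset hsub
  · intro S hS
    rw [mem_powersetCard] at hS
    have hdisj : Disjoint S ({u, v} : Finset V) :=
      disjoint_of_subset_left hS.1 sdiff_disjoint
    exact union_sdiff_cancel_right hdisj

lemma choose_identity' {m s : ℕ} (h2 : 2 ≤ s) (hm : 2 ≤ m) :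
    m.choose s * (s*(s-1)) = (m*(m-1)) * (m-2).choose (s-2) := by
  obtain ⟨b, rfl⟩ := Nat.exists_eq_add_of_le h2
  obtain ⟨a, rfl⟩ := Nat.exists_eq_add_of_le hm
  have e1 : 2+a = a+2 := by omega
  have e2 : 2+b = b+2 := by omega
  rw [e1, e2]
  exact choose_identity a b

lemma exists_dense_subset {V : Type*} [Fintype V] (T : Finset V) (E : Finset (Sym2 V))
    (hE : ∀ e ∈ E, ¬ e.IsDiag ∧ ∀ w ∈ e, w ∈ T)
    (s : ℕ) (h2 : 2 ≤ s) (hsm : s ≤ T.card) :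
    ∃ S, S ⊆ T ∧ S.card = s ∧
      E.card * (s * (s-1)) ≤ (E.filter (fun e => ∀ w ∈ e, w ∈ S)).card * (T.card * (T.card - 1)) := by
  classical
  set m := T.card with hm
  set P := T.powersetCard s with hP
  have key : ∀ e ∈ E, (P.filter (fun S => ∀ w ∈ e, w ∈ S)).card = (m-2).choose (s-2) := by
    intro e he
    induction e using Sym2.ind with
    | _ u v =>
      have hne : u ≠ v := by
        have := (hE _ he).1; simpa [Sym2.isDiag_iff_proj_eq] using this
      have hu : u ∈ T := (hE _ he).2 u (by simp)
      have hv : v ∈ T := (hE _ he).2 v (by simp)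
      have hfe : P.filter (fun S => ∀ w ∈ (s(u,v) : Sym2 V), w ∈ S)
          = P.filter (fun S => u ∈ S ∧ v ∈ S) :=
        Finset.filter_congr (fun S _ => by simp [Sym2.mem_iff, forall_eq_or_imp])
      rw [hfe]
      exact card_pair_filter T s h2 u v hne hu hv
  have hdc : ∑ S ∈ P, (E.filter (fun e => ∀ w ∈ e, w ∈ S)).card
      = E.card * (m-2).choose (s-2) := by
    calc ∑ S ∈ P, (E.filter (fun e => ∀ w ∈ e, w ∈ S)).card
        = ∑ S ∈ P, ∑ e ∈ E, if (∀ w ∈ e, w ∈ S) then 1 else 0 := by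
          simp only [Finset.card_filter]
      _ = ∑ e ∈ E, ∑ S ∈ P, if (∀ w ∈ e, w ∈ S) then 1 else 0 := Finset.sum_comm
      _ = ∑ e ∈ E, (P.filter (fun S => ∀ w ∈ e, w ∈ S)).card := by
          simp only [Finset.card_filter]
      _ = ∑ e ∈ E, (m-2).choose (s-2) := Finset.sum_congr rfl key
      _ = E.card * (m-2).choose (s-2) := by rw [Finset.sum_const, smul_eq_mul]
  have hPne : P.Nonempty := Finset.powersetCard_nonempty.2 hsm
  have hPcard : P.card = m.choose s := Finset.card_powersetCard s T
  have havg : ∃ S ∈ P, E.card * (m-2).choose (s-2)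
      ≤ (E.filter (fun e => ∀ w ∈ e, w ∈ S)).card * m.choose s := by
    apply Finset.exists_le_of_sum_le hPne
    apply le_of_eq
    calc ∑ _S ∈ P, E.card * (m-2).choose (s-2)
        = m.choose s * (E.card * (m-2).choose (s-2)) := by
          rw [Finset.sum_const, smul_eq_mul, hPcard]
      _ = (∑ S ∈ P, (E.filter (fun e => ∀ w ∈ e, w ∈ S)).card) * m.choose s := by
          rw [hdc]; ring
      _ = ∑ S ∈ P, (E.filter (fun e => ∀ w ∈ e, w ∈ S)).card * m.choose s := by
          rw [Finset.sum_mul]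
  obtain ⟨S, hSP, hSle⟩ := havg
  rw [hP, Finset.mem_powersetCard] at hSP
  refine ⟨S, hSP.1, hSP.2, ?_⟩
  have hm2 : 2 ≤ m := h2.trans hsm
  have hCpos : 0 < (m-2).choose (s-2) := Nat.choose_pos (by omega)
  have hid := choose_identity' h2 hm2
  apply Nat.le_of_mul_le_mul_right _ hCpos
  calc E.card * (s*(s-1)) * (m-2).choose (s-2)
      = E.card * (m-2).choose (s-2) * (s*(s-1)) := by ring
    _ ≤ (E.filter (fun e => ∀ w ∈ e, w ∈ S)).card * m.choose s * (s*(s-1)) :=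
        Nat.mul_le_mul_right _ hSle
    _ = (E.filter (fun e => ∀ w ∈ e, w ∈ S)).card * (m.choose s * (s*(s-1))) := by ring
    _ = (E.filter (fun e => ∀ w ∈ e, w ∈ S)).card * ((m*(m-1)) * (m-2).choose (s-2)) := by rw [hid]
    _ = (E.filter (fun e => ∀ w ∈ e, w ∈ S)).card * (m*(m-1)) * (m-2).choose (s-2) := by ring

end AuxCount

/-- **Proposition (crux monotonicity)**. For every graph `G` and `0 < α < α' < 1`,
`c_α(G) ≤ ⌈(α/α')(c_{α'}(G) - 1) + 1⌉`. -/
theorem crux_le_of_lt {V : Type*} [Fintype V] (G : SimpleGraph V) (α α' : ℝ)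
    (h0 : 0 < α) (h1 : α < α') (h2 : α' < 1) :
    crux G α ≤ ⌈(α / α') * ((crux G α' : ℝ) - 1) + 1⌉₊ := by
  have ha'pos : 0 < α' := h0.trans h1
  have hq0 : 0 < α / α' := div_pos h0 ha'pos
  have hq1 : α / α' < 1 := (div_lt_one ha'pos).2 h1
  have hd0 : 0 ≤ avgDeg G := by unfold avgDeg; positivity
  set m := crux G α' with hmdef
  set k := ⌈(α / α') * ((m : ℝ) - 1) + 1⌉₊ with hkdef
  have hk1 : 1 ≤ k := by
    rw [hkdef]
    rw [Nat.one_le_ceil_iff]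
    have hm0 : (0:ℝ) ≤ (m:ℝ) := Nat.cast_nonneg m
    nlinarith
  by_cases hVne : Nonempty V
  case neg =>
    have hempty : {n : ℕ | ∃ H : G.Subgraph, H.verts.Nonempty ∧
        α * avgDeg G ≤ subAvgDeg H ∧ H.verts.ncard = n} = ∅ := by
      ext n
      simp only [Set.mem_setOf_eq, Set.mem_empty_iff_false, iff_false]
      rintro ⟨H, ⟨v, -⟩, -, -⟩
      exact hVne ⟨v⟩
    show sInf _ ≤ k
    rw [hempty, Nat.sInf_empty]
    exact Nat.zero_le _
  case pos =>
  obtain ⟨v0⟩ := hVne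
  by_cases hdpos : 0 < avgDeg G
  case neg =>
    have hdz : avgDeg G = 0 := le_antisymm (not_lt.1 hdpos) hd0
    have h1mem : (1 : ℕ) ∈ {n : ℕ | ∃ H : G.Subgraph, H.verts.Nonempty ∧
        α * avgDeg G ≤ subAvgDeg H ∧ H.verts.ncard = n} := by
      refine ⟨G.singletonSubgraph v0, ⟨v0, rfl⟩, ?_, ?_⟩
      · rw [hdz, mul_zero, subAvgDeg, edgeSet_singletonSubgraph]
        simp
      · rw [singletonSubgraph_verts, Set.ncard_singleton]
    exact le_trans (Nat.sInf_le h1mem) hk1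
  case pos =>
  -- the crux-α' set is nonempty
  have hne : {n : ℕ | ∃ H : G.Subgraph, H.verts.Nonempty ∧
      α' * avgDeg G ≤ subAvgDeg H ∧ H.verts.ncard = n}.Nonempty := by
    refine ⟨Fintype.card V, ⊤, ?_, ?_, ?_⟩
    · rw [Subgraph.verts_top]; exact ⟨v0, trivial⟩
    · have htop : subAvgDeg (⊤ : G.Subgraph) = avgDeg G := by
        rw [subAvgDeg, Subgraph.edgeSet_top, Subgraph.verts_top, Set.ncard_univ,
          Nat.card_eq_fintype_card, avgDeg]
      rw [htop]
      nlinarith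
    · rw [Subgraph.verts_top, Set.ncard_univ, Nat.card_eq_fintype_card]
  have hmmem : m ∈ {n : ℕ | ∃ H : G.Subgraph, H.verts.Nonempty ∧
      α' * avgDeg G ≤ subAvgDeg H ∧ H.verts.ncard = n} := Nat.sInf_mem hne
  obtain ⟨H, hHne, hHavg, hHcard⟩ := hmmem
  have hsubpos : 0 < subAvgDeg H := lt_of_lt_of_le (mul_pos ha'pos hdpos) hHavg
  -- H has an edge, so m ≥ 2
  have hvfin : H.verts.Finite := Set.toFinite _
  have hEfin : H.edgeSet.Finite := Set.toFinite _
  have hEpos : 0 < H.edgeSet.ncard := by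
    by_contra hc
    push_neg at hc
    interval_cases h : H.edgeSet.ncard
    · rw [subAvgDeg, h] at hsubpos; simp at hsubpos
  have hm2 : 2 ≤ m := by
    obtain ⟨e, he⟩ := (Set.ncard_pos hEfin).1 hEpos
    rw [← hHcard]
    induction e using Sym2.ind with
    | _ u v =>
      rw [Subgraph.mem_edgeSet] at he
      have huv : u ≠ v := (H.adj_sub he).ne
      have h1lt : 1 < H.verts.ncard :=
        (Set.one_lt_ncard hvfin).2 ⟨u, H.edge_vert he, v, H.edge_vert he.symm, huv⟩
      omega
  have hmR : (2:ℝ) ≤ (m:ℝ) := by exact_mod_cast hm2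
  -- the target size k
  have hxk : (α / α') * ((m : ℝ) - 1) + 1 ≤ (k : ℝ) := Nat.le_ceil _
  have hk2 : 2 ≤ k := by
    have h' : ((1:ℕ):ℝ) < (α / α') * ((m : ℝ) - 1) + 1 := by push_cast; nlinarith
    have := Nat.lt_ceil.2 h'
    omega
  have hkm : k ≤ m := by
    rw [hkdef]
    apply Nat.ceil_le.2
    nlinarith
  -- counting setup
  set T := hvfin.toFinset with hT
  set E := hEfin.toFinset with hE
  have hTcard : T.card = m := by rw [hT, ← Set.ncard_eq_toFinset_card _ hvfin, hHcard]
  have hEcard : E.card = H.edgeSet.ncard := by rw [hE, ← Set.ncard_eq_toFinset_card _ hEfin]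
  have hEprop : ∀ e ∈ E, ¬ e.IsDiag ∧ ∀ w ∈ e, w ∈ T := by
    intro e he
    rw [hE, Set.Finite.mem_toFinset] at he
    induction e using Sym2.ind with
    | _ u v =>
      rw [Subgraph.mem_edgeSet] at he
      refine ⟨by simpa [Sym2.mk_isDiag_iff] using (H.adj_sub he).ne, ?_⟩
      intro w hw
      rw [Sym2.mem_iff] at hw
      rw [hT, Set.Finite.mem_toFinset]
      rcases hw with rfl | rfl
      · exact H.edge_vert he
      · exact H.edge_vert he.symm
  obtain ⟨S, hST, hScard, hSineq⟩ :=
    exists_dense_subset T E hEprop k hk2 (by rw [hTcard]; exact hkm)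
  set f := (E.filter (fun e => ∀ w ∈ e, w ∈ S)).card with hf
  -- build the subgraph on S
  let H' : G.Subgraph :=
    { verts := ↑S
      Adj := fun u v => u ∈ S ∧ v ∈ S ∧ H.Adj u v
      adj_sub := fun h => H.adj_sub h.2.2
      edge_vert := fun h => h.1
      symm := ⟨fun u v h => ⟨h.2.1, h.1, h.2.2.symm⟩⟩ }
  have hH'edge : H'.edgeSet = ↑(E.filter (fun e => ∀ w ∈ e, w ∈ S)) := by
    ext e
    induction e using Sym2.ind with
    | _ u v =>
      simp only [Subgraph.mem_edgeSet, Finset.mem_coe, Finset.mem_filter, hE,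
        Set.Finite.mem_toFinset, Sym2.mem_iff, forall_eq_or_imp, forall_eq]
      tauto
  have hH'ecard : H'.edgeSet.ncard = f := by rw [hH'edge, Set.ncard_coe_finset]
  have hH'vcard : H'.verts.ncard = k := by
    show (↑S : Set V).ncard = k
    rw [Set.ncard_coe_finset, hScard]
  -- the average-degree bound
  have hkR : (2:ℝ) ≤ (k:ℝ) := by exact_mod_cast hk2
  have hkpos : (0:ℝ) < (k:ℝ) := by linarith
  have hmpos : (0:ℝ) < (m:ℝ) := by linarith
  set eH : ℝ := (H.edgeSet.ncard : ℝ) with heH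
  have heH0 : 0 ≤ eH := Nat.cast_nonneg _
  have hkey : eH * ((k:ℝ) * ((k:ℝ) - 1)) ≤ (f:ℝ) * ((m:ℝ) * ((m:ℝ) - 1)) := by
    have h' := hSineq
    rw [hTcard, hEcard] at h'
    have hcast : ((H.edgeSet.ncard * (k * (k-1)) : ℕ) : ℝ)
        ≤ ((f * (m * (m-1)) : ℕ) : ℝ) := Nat.cast_le.2 h'
    push_cast [Nat.cast_sub (by omega : 1 ≤ k), Nat.cast_sub (by omega : 1 ≤ m)] at hcast
    convert hcast using 1 <;> ring
  have hHsub : subAvgDeg H = 2 * eH / (m:ℝ) := by rw [subAvgDeg, hHcard]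
  have hH'sub : subAvgDeg H' = 2 * (f:ℝ) / (k:ℝ) := by rw [subAvgDeg, hH'ecard, hH'vcard]
  have hq : (α/α') * ((m:ℝ)-1) ≤ (k:ℝ)-1 := by linarith
  have hcore : (α / α') * (2 * eH / (m:ℝ)) ≤ 2 * (f:ℝ) / (k:ℝ) := by
    rw [← mul_div_assoc, div_le_div_iff₀ hmpos hkpos]
    have hf0 : (0:ℝ) ≤ (f:ℝ) := Nat.cast_nonneg _
    have haux := mul_le_mul_of_nonneg_left hq (mul_nonneg heH0 hkpos.le)
    nlinarith [hkey, haux, hf0, hmpos, hkpos]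
  have hfinal : α * avgDeg G ≤ subAvgDeg H' := by
    have e1 : α * avgDeg G = (α/α') * (α' * avgDeg G) := by field_simp
    rw [e1, hH'sub]
    calc (α/α') * (α' * avgDeg G) ≤ (α/α') * subAvgDeg H :=
          mul_le_mul_of_nonneg_left hHavg hq0.le
      _ = (α/α') * (2*eH/(m:ℝ)) := by rw [hHsub]
      _ ≤ _ := hcore
  have hSne : S.Nonempty := Finset.card_pos.1 (by omega)
  obtain ⟨x, hx⟩ := hSne
  apply Nat.sInf_le
  exact ⟨H', ⟨x, hx⟩, hfinal, hH'vcard⟩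

end HamSubsets
end
end

section
/- Let C > 30, 0 < ε₁ ≤ 1/(10C), k > 0 and d > 0, and set δ = C·ε₁/log 3. Then every graph G with average degree d(G) = d has a subgraph H such that H is an (ε₁, k)-expander, d(H) ≥ (1 − δ)d, and the minimum degree of H satisfies δ(H) ≥ d(H)/2. -/
open scoped Classical

noncomputable section

namespace HamSubsets

open SimpleGraph

variable {V : Type*}

/-! ### Auxiliary material for `exists_expander_subgraph` -/

section KSAux

set_option maxHeartbeats 1000000

/-- Weight function for the extremal argument. -/
noncomputable def KSth (c k x : ℝ) : ℝ := 1 - c / Real.log (max (15 * x / k) 3)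

lemma KS_one_lt_log_three : 1 < Real.log 3 := by
  rw [Real.lt_log_iff_exp_lt (by norm_num)]
  exact lt_trans Real.exp_one_lt_d9 (by norm_num)

lemma KS_one_lt_logmax (k x : ℝ) : 1 < Real.log (max (15 * x / k) 3) :=
  lt_of_lt_of_le KS_one_lt_log_three
    (Real.log_le_log (by norm_num) (le_max_right _ _))

lemma KSth_le_one {c : ℝ} (hc : 0 ≤ c) (k x : ℝ) : KSth c k x ≤ 1 :=
  sub_le_self _ (div_nonneg hc (le_of_lt (lt_trans one_pos (KS_one_lt_logmax k x))))

lemma KSth_ge {c : ℝ} (hc : 0 ≤ c) (k x : ℝ) : 1 - c / Real.log 3 ≤ KSth c k x := by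
  have h1 : (0:ℝ) < Real.log 3 := lt_trans one_pos KS_one_lt_log_three
  have h2 : Real.log 3 ≤ Real.log (max (15 * x / k) 3) :=
    Real.log_le_log (by norm_num) (le_max_right _ _)
  exact sub_le_sub_left (div_le_div_of_nonneg_left hc h1 h2) 1

lemma KSth_mono {c k : ℝ} (hc : 0 ≤ c) (hk : 0 < k) {x x' : ℝ} (h : x ≤ x') :
    KSth c k x ≤ KSth c k x' := by
  have h2 : Real.log (max (15 * x / k) 3) ≤ Real.log (max (15 * x' / k) 3) := by
    apply Real.log_le_log (by positivity)
    exact max_le_max (by gcongr) le_rfl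
  exact sub_le_sub_left
    (div_le_div_of_nonneg_left hc (lt_trans one_pos (KS_one_lt_logmax k x)) h2) 1

lemma KSth_half {c : ℝ} (hc : 0 ≤ c) (hc2 : c ≤ 1/10) (k x : ℝ) : (1:ℝ)/2 ≤ KSth c k x := by
  have h1 : (1:ℝ) < Real.log 3 := KS_one_lt_log_three
  have h2 : c / Real.log 3 ≤ c := div_le_self hc h1.le
  nlinarith [KSth_ge hc k x]

lemma KSlog_ge_two {k y : ℝ} (hk : 0 < k) (hy : k/2 ≤ y) : 2 ≤ Real.log (15 * y / k) := by
  have hyk : (15:ℝ)/2 ≤ 15 * y / k := by rw [le_div_iff₀ hk]; linarith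
  rw [Real.le_log_iff_exp_le (by linarith)]
  have he : Real.exp 2 = Real.exp 1 * Real.exp 1 := by
    rw [← Real.exp_add]; norm_num
  nlinarith [Real.exp_one_lt_d9, Real.exp_pos 1]

lemma KSkey (C ε₁ k y : ℝ) (hC : 30 < C) (h0 : 0 < ε₁) (h1 : ε₁ ≤ 1/(10*C))
    (hk : 0 < k) (hy : k/2 ≤ y) :
    (1 + ε₁ / (Real.log (15*y/k))^2) * KSth (C*ε₁) k ((1 + ε₁/(Real.log (15*y/k))^2) * y) ≤
      KSth (C*ε₁) k (2*y) := by
  have hCpos : (0:ℝ) < C := by linarith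
  have hypos : 0 < y := by nlinarith
  have hyk : (15:ℝ)/2 ≤ 15 * y / k := by rw [le_div_iff₀ hk]; linarith
  set L := Real.log (15*y/k) with hLdef
  have hL : 2 ≤ L := KSlog_ge_two hk hy
  have hLpos : 0 < L := by linarith
  have hε₁' : ε₁ ≤ 1/300 := by
    have h10C : (0:ℝ) < 10*C := by linarith
    have := (le_div_iff₀ h10C).mp h1
    nlinarith
  set ε := ε₁ / L^2 with hεdef
  have hεpos : 0 < ε := by positivity
  have hεL : ε * L^2 = ε₁ := div_mul_cancel₀ _ (by positivity)
  have hεe : ε ≤ ε₁ := by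
    rw [hεdef]; apply div_le_self h0.le; nlinarith
  have hεsm : ε ≤ 1/300 := hεe.trans hε₁'
  set c := C * ε₁ with hcdef
  have hc30 : 30 * ε₁ ≤ c := by nlinarith
  have hcpos : 0 < c := by positivity
  have hc10 : c ≤ 1/10 := by
    have h10C : (0:ℝ) < 10*C := by linarith
    have := (le_div_iff₀ h10C).mp h1
    nlinarith
  set a := Real.log (1+ε) with hadef
  have ha0 : 0 ≤ a := Real.log_nonneg (by linarith)
  have haε : a ≤ ε := by
    have := Real.log_le_sub_one_of_pos (x := 1+ε) (by linarith)
    linarith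
  set b := Real.log 2 with hbdef
  have hb1 : (0.69:ℝ) ≤ b := by have := Real.log_two_gt_d9; rw [hbdef]; norm_num; linarith
  have hb2 : b ≤ (0.7:ℝ) := by have := Real.log_two_lt_d9; rw [hbdef]; norm_num; linarith
  have hr1 : 15 * ((1+ε)*y) / k = (1+ε) * (15*y/k) := by ring
  have harg1 : max (15 * ((1+ε)*y) / k) 3 = (1+ε) * (15*y/k) := by
    rw [max_eq_left]; · exact hr1
    rw [hr1]; nlinarith
  have hr2 : 15 * (2*y) / k = 2 * (15*y/k) := by ring
  have harg2 : max (15 * (2*y) / k) 3 = 2 * (15*y/k) := by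
    rw [max_eq_left]; · exact hr2
    rw [hr2]; nlinarith
  have hlog1 : Real.log ((1+ε) * (15*y/k)) = a + L := by
    rw [Real.log_mul (by linarith) (by linarith)]
  have hlog2 : Real.log (2 * (15*y/k)) = b + L := by
    rw [Real.log_mul (by norm_num) (by linarith)]
  rw [KSth, KSth, harg1, harg2, hlog1, hlog2]
  have hA : (0:ℝ) < a + L := by linarith
  have hB : (0:ℝ) < b + L := by linarith
  rw [one_sub_div hA.ne', one_sub_div hB.ne', ← mul_div_assoc, div_le_div_iff₀ hA hB]
  have haL : a*L ≤ (1/300)*L := by nlinarith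
  have hbL : b*L ≤ (7/10)*L := by nlinarith
  have hab : a*b ≤ (1/300)*(7/10) := by nlinarith
  have hLL : 2*L ≤ L^2 := by nlinarith
  have p1 : (a+L)*(b+L) ≤ (9/4) * L^2 := by nlinarith [haL, hbL, hab, hLL]
  have e1 : ε * ((a+L)*(b+L)) ≤ (9/4) * ε₁ := by
    have h := mul_le_mul_of_nonneg_left p1 hεpos.le
    nlinarith [hεL]
  have e2 : 20 * ε₁ ≤ c * (b - a) := by
    have h : (30*ε₁) * (0.686) ≤ c * (b-a) :=
      mul_le_mul hc30 (by linarith) (by norm_num) (by linarith)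
    nlinarith
  have e3 : 0 ≤ ε * (c * (b+L)) := by positivity
  nlinarith [e1, e2, e3]

variable [Fintype V] (G : SimpleGraph V)

/-- Number of edges of the subgraph of `G` induced on `S`. -/
noncomputable def eCnt (S : Set V) : ℕ := ((⊤ : G.Subgraph).induce S).edgeSet.ncard

lemma mem_eSet {S : Set V} {u v : V} :
    s(u,v) ∈ ((⊤ : G.Subgraph).induce S).edgeSet ↔ u ∈ S ∧ v ∈ S ∧ G.Adj u v := by
  rw [Subgraph.mem_edgeSet]; simp

lemma eSplit {S X N : Set V}
    (hN : ∀ ⦃u v⦄, u ∈ X → v ∈ S → G.Adj u v → v ∈ X ∪ N) :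
    eCnt G S ≤ eCnt G (X ∪ N) + eCnt G (S \ X) := by
  have hsub : ((⊤ : G.Subgraph).induce S).edgeSet ⊆
      ((⊤ : G.Subgraph).induce (X ∪ N)).edgeSet ∪ ((⊤ : G.Subgraph).induce (S \ X)).edgeSet := by
    intro e
    induction e using Sym2.ind with
    | _ u v =>
      intro he
      rw [mem_eSet] at he
      obtain ⟨hu, hv, hadj⟩ := he
      by_cases hux : u ∈ X
      · left; rw [mem_eSet]
        exact ⟨Set.mem_union_left _ hux, hN hux hv hadj, hadj⟩
      · by_cases hvx : v ∈ X
        · left; rw [mem_eSet]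
          exact ⟨hN hvx hu hadj.symm, Set.mem_union_left _ hvx, hadj⟩
        · right; rw [mem_eSet]
          exact ⟨⟨hu, hux⟩, ⟨hv, hvx⟩, hadj⟩
  calc eCnt G S ≤ (((⊤ : G.Subgraph).induce (X ∪ N)).edgeSet ∪
        ((⊤ : G.Subgraph).induce (S \ X)).edgeSet).ncard :=
        Set.ncard_le_ncard hsub (Set.toFinite _)
    _ ≤ _ := Set.ncard_union_le _ _

lemma eDrop (S : Set V) (v : V) :
    eCnt G S ≤ eCnt G (S \ {v}) + (((⊤ : G.Subgraph).induce S).neighborSet v).ncard := by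
  have hsub : ((⊤ : G.Subgraph).induce S).edgeSet ⊆
      ((⊤ : G.Subgraph).induce (S \ {v})).edgeSet ∪
      ((fun u => s(v,u)) '' (((⊤ : G.Subgraph).induce S).neighborSet v)) := by
    intro e
    induction e using Sym2.ind with
    | _ u w =>
      intro he
      rw [mem_eSet] at he
      obtain ⟨hu, hw, hadj⟩ := he
      by_cases huv : u = v
      · right; subst huv
        exact ⟨w, by simpa [Subgraph.mem_neighborSet] using ⟨hu, hw, hadj⟩, rfl⟩
      · by_cases hwv : w = v
        · right; subst hwv
          exact ⟨u, by simpa [Subgraph.mem_neighborSet] using ⟨hw, hu, hadj.symm⟩,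
            Sym2.eq_swap⟩
        · left; rw [mem_eSet]
          exact ⟨⟨hu, huv⟩, ⟨hw, hwv⟩, hadj⟩
  have himg : ((fun u => s(v,u)) '' (((⊤ : G.Subgraph).induce S).neighborSet v)).ncard
      = (((⊤ : G.Subgraph).induce S).neighborSet v).ncard :=
    Set.ncard_image_of_injective _ (fun a b h => (Sym2.congr_right).mp h)
  calc eCnt G S ≤ _ := Set.ncard_le_ncard hsub (Set.toFinite _)
    _ ≤ _ + _ := Set.ncard_union_le _ _
    _ = _ := by rw [himg]; rfl

lemma eTop : eCnt G Set.univ = G.edgeSet.ncard := by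
  have h : ((⊤ : G.Subgraph).induce Set.univ).edgeSet = G.edgeSet := by
    ext e
    induction e using Sym2.ind with
    | _ u v => rw [mem_eSet]; simp [SimpleGraph.mem_edgeSet]
  rw [eCnt, h]

lemma card_verts_coe (S : Set V) :
    Fintype.card ((⊤ : G.Subgraph).induce S).verts = S.ncard := by
  rw [← Nat.card_eq_fintype_card]
  exact Nat.card_coe_set_eq S

lemma edgeCnt_coe (S : Set V) :
    (((⊤ : G.Subgraph).induce S).coe.edgeSet).ncard = eCnt G S := by
  rw [eCnt, ← Subgraph.image_coe_edgeSet_coe]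
  exact (Set.ncard_image_of_injective _ (Sym2.map.injective Subtype.coe_injective)).symm

end KSAux

set_option maxHeartbeats 4000000

/-- **Lemma (Komlós–Szemerédi)**. Let `C > 30`, `0 < ε₁ ≤ 1/(10C)`, `k > 0`, `d > 0` and
`δ = Cε₁/log 3`. Every graph `G` with average degree `d` has a subgraph `H` which is an
`(ε₁, k)`-expander with `d(H) ≥ (1 - δ)d` and `δ(H) ≥ d(H)/2`. -/
theorem exists_expander_subgraph (C ε₁ k d : ℝ) (hC : 30 < C) (h0 : 0 < ε₁)
    (h1 : ε₁ ≤ 1 / (10 * C)) (hk : 0 < k) (hd : 0 < d)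
    {V : Type*} [Fintype V] (G : SimpleGraph V) (hG : avgDeg G = d) :
    ∃ H : G.Subgraph, IsExpander H.coe ε₁ k ∧
      (1 - C * ε₁ / Real.log 3) * d ≤ avgDeg H.coe ∧
      ∀ v ∈ H.verts, avgDeg H.coe / 2 ≤ (H.degree v : ℝ) := by
  classical
  have hCpos : (0:ℝ) < C := by linarith
  have hcnn : (0:ℝ) ≤ C * ε₁ := by positivity
  have h10C : (0:ℝ) < 10 * C := by linarith
  have hε₁10C : ε₁ * (10 * C) ≤ 1 := (le_div_iff₀ h10C).mp h1
  have hc10 : C * ε₁ ≤ 1/10 := by nlinarith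
  have hε300 : ε₁ ≤ 1/300 := by nlinarith
  have hn0 : (0:ℝ) < (Fintype.card V : ℝ) := by
    rcases Nat.eq_zero_or_pos (Fintype.card V) with h | h
    · exfalso
      rw [avgDeg, h] at hG
      simp at hG
      exact absurd hG.symm hd.ne'
    · exact_mod_cast h
  set Q : ℕ → Prop := fun n => ∃ S : Set V, S.Nonempty ∧
      d/2 * n * KSth (C*ε₁) k n ≤ (eCnt G S : ℝ) ∧ S.ncard = n with hQdef
  have hQuniv : Q (Fintype.card V) := by
    haveI hone : Nonempty V := Fintype.card_pos_iff.mp (by exact_mod_cast hn0)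
    refine ⟨Set.univ, Set.univ_nonempty, ?_, by rw [Set.ncard_univ, Nat.card_eq_fintype_card]⟩
    rw [eTop]
    have he : (G.edgeSet.ncard : ℝ) = d * (Fintype.card V) / 2 := by
      rw [avgDeg] at hG
      field_simp at hG
      linarith
    have := KSth_le_one hcnn k (Fintype.card V : ℝ)
    nlinarith
  have hne : {n | Q n}.Nonempty := ⟨_, hQuniv⟩
  set m := sInf {n | Q n} with hmdef
  obtain ⟨S, hSne, hSineq, hScard⟩ := Nat.sInf_mem hne
  rw [← hmdef] at hSineq hScard
  have hmin : ∀ n, n < m → ¬ Q n := by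
    intro n hn hQn
    have h := Nat.sInf_le (show n ∈ {n' | Q n'} from hQn)
    rw [← hmdef] at h
    omega
  have hSfin : S.Finite := Set.toFinite S
  have hx1 : 1 ≤ m := by rw [← hScard]; exact (Set.ncard_pos hSfin).mpr hSne
  have hmR : (1:ℝ) ≤ m := by exact_mod_cast hx1
  have hm0 : (0:ℝ) < m := by linarith
  have hθm : (1:ℝ)/2 ≤ KSth (C*ε₁) k m := KSth_half hcnn hc10 k m
  have heR0 : (0:ℝ) < (eCnt G S : ℝ) :=
    lt_of_lt_of_le (mul_pos (mul_pos (by linarith : (0:ℝ) < d/2) hm0)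
      (by linarith : (0:ℝ) < KSth (C*ε₁) k m)) hSineq
  have heN : 0 < eCnt G S := by exact_mod_cast heR0
  have hx2 : 2 ≤ m := by
    have hne' : ((⊤ : G.Subgraph).induce S).edgeSet.Nonempty :=
      Set.nonempty_of_ncard_ne_zero (by rw [show ((⊤ : G.Subgraph).induce S).edgeSet.ncard = eCnt G S from rfl]; omega)
    obtain ⟨e, he⟩ := hne'
    have hex : ∃ u ∈ S, ∃ w ∈ S, u ≠ w := by
      induction e using Sym2.ind with
      | _ u w =>
        rw [mem_eSet] at he
        exact ⟨u, he.1, w, he.2.1, he.2.2.ne⟩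
    rw [← hScard]
    exact (Set.one_lt_ncard hSfin).mpr hex
  have hverts : Fintype.card ((⊤ : G.Subgraph).induce S).verts = m := by
    rw [card_verts_coe]
    exact hScard
  have havg : avgDeg ((⊤ : G.Subgraph).induce S).coe = 2 * (eCnt G S : ℝ) / m := by
    rw [avgDeg, edgeCnt_coe, hverts]
  refine ⟨(⊤ : G.Subgraph).induce S, ?_, ?_, ?_⟩
  · -- expander
    intro X hX1 hX2
    by_contra hcon
    push_neg at hcon
    set y := X.ncard with hydef
    have hyR : k/2 ≤ (y:ℝ) := hX1
    have hy0 : (0:ℝ) < y := by linarith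
    have hy1 : 1 ≤ y := by exact_mod_cast hy0
    have hyk5 : ¬ ((y:ℝ) < k/5) := by push_neg; linarith
    have heps : epsFun ε₁ k y = ε₁ / (Real.log (15 * (y:ℝ) / k))^2 := by
      rw [epsFun, if_neg hyk5]
    have b2key := KSkey C ε₁ k (y:ℝ) hC h0 h1 hk hyR
    rw [heps] at hcon
    set L := Real.log (15 * (y:ℝ) / k) with hLdef
    have hL2 : 2 ≤ L := KSlog_ge_two hk hyR
    have hεpos : 0 < ε₁ / L^2 := by positivity
    have hεle : ε₁ / L^2 ≤ 1 := by
      have h := div_le_self h0.le (show (1:ℝ) ≤ L^2 by nlinarith)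
      linarith
    set X' := Subtype.val '' X with hX'def
    have hX'S : X' ⊆ S := by
      rintro _ ⟨u, hu, rfl⟩
      exact u.2
    have hX'card : X'.ncard = y := Set.ncard_image_of_injective _ Subtype.val_injective
    set N := extNbhd ((⊤ : G.Subgraph).induce S).coe X with hNdef
    set N' := Subtype.val '' N with hN'def
    have hN'card : N'.ncard = N.ncard := Set.ncard_image_of_injective _ Subtype.val_injective
    have hcon' : (N.ncard : ℝ) < ε₁ / L^2 * y := hcon
    have hsplitcond : ∀ ⦃u w⦄, u ∈ X' → w ∈ S → G.Adj u w → w ∈ X' ∪ N' := by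
      rintro _ w ⟨u', hu', rfl⟩ hw hadj
      by_cases hwX : (⟨w, hw⟩ : ((⊤ : G.Subgraph).induce S).verts) ∈ X
      · exact Or.inl ⟨_, hwX, rfl⟩
      · refine Or.inr ⟨⟨w, hw⟩, ⟨hwX, u', hu', ?_⟩, rfl⟩
        show ((⊤ : G.Subgraph).induce S).Adj u'.1 w
        exact ⟨u'.2, hw, hadj⟩
    have hsplit := eSplit G hsplitcond
    set n₁ := (X' ∪ N').ncard with hn₁def
    set n₂ := (S \ X').ncard with hn₂def
    have hn₁R : (n₁:ℝ) < (1 + ε₁/L^2) * y := by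
      have h := Set.ncard_union_le X' N'
      have h2 : (n₁:ℝ) ≤ (X'.ncard:ℝ) + N'.ncard := by exact_mod_cast h
      rw [hX'card, hN'card] at h2
      linarith only [h2, hcon']
    have h2y : 2*(y:ℝ) ≤ m := by
      rw [Fintype.card_eq_nat_card, Nat.card_coe_set_eq, Subgraph.induce_verts,
        hScard] at hX2
      linarith
    have hym : y ≤ m := by
      have : (y:ℝ) ≤ m := by linarith
      exact_mod_cast this
    have h2yN : 2*y ≤ m := by exact_mod_cast h2y
    have hεy : (ε₁/L^2) * (y:ℝ) ≤ 1 * y := mul_le_mul_of_nonneg_right hεle hy0.le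
    have hn₁m : n₁ < m := by
      have h : (n₁:ℝ) < m := by linarith only [hn₁R, hεy, h2y]
      exact_mod_cast h
    have hn₂eq : n₂ = m - y := by
      rw [hn₂def, Set.ncard_diff hX'S (Set.toFinite _), hX'card, hScard]
    have hn₂R : (n₂:ℝ) = (m:ℝ) - y := by
      rw [hn₂eq]
      push_cast [hym]
      ring
    have hn₂m : n₂ < m := by omega
    have hX'ne : X'.Nonempty := by
      apply (Set.ncard_pos (Set.toFinite _)).mp
      omega
    have hS₂ne : (S \ X').Nonempty := by
      apply (Set.ncard_pos (Set.toFinite _)).mp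
      omega
    have he₁ : (eCnt G (X' ∪ N') : ℝ) < d/2 * n₁ * KSth (C*ε₁) k n₁ := by
      by_contra hge
      push_neg at hge
      exact hmin n₁ hn₁m ⟨X' ∪ N', hX'ne.mono Set.subset_union_left, hge, rfl⟩
    have he₂ : (eCnt G (S \ X') : ℝ) < d/2 * n₂ * KSth (C*ε₁) k n₂ := by
      by_contra hge
      push_neg at hge
      exact hmin n₂ hn₂m ⟨S \ X', hS₂ne, hge, rfl⟩
    have hθ₁ := KSth_half hcnn hc10 k (n₁:ℝ)
    have hθ₂ := KSth_half hcnn hc10 k (n₂:ℝ)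
    have hmono1 : KSth (C*ε₁) k n₁ ≤ KSth (C*ε₁) k ((1+ε₁/L^2)*y) :=
      KSth_mono hcnn hk hn₁R.le
    have b1 : (n₁:ℝ) * KSth (C*ε₁) k n₁ ≤
        ((1+ε₁/L^2)*y) * KSth (C*ε₁) k ((1+ε₁/L^2)*y) :=
      mul_le_mul hn₁R.le hmono1 (by linarith) (by positivity)
    have b2 : ((1+ε₁/L^2)*(y:ℝ)) * KSth (C*ε₁) k ((1+ε₁/L^2)*y) ≤
        (y:ℝ) * KSth (C*ε₁) k (2*y) := by
      linarith only [mul_le_mul_of_nonneg_left b2key hy0.le]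
    have b3 : KSth (C*ε₁) k (2*(y:ℝ)) ≤ KSth (C*ε₁) k m :=
      KSth_mono hcnn hk (by linarith)
    have b4 : KSth (C*ε₁) k (n₂:ℝ) ≤ KSth (C*ε₁) k m :=
      KSth_mono hcnn hk (by rw [hn₂R]; linarith)
    have c1 : (n₁:ℝ) * KSth (C*ε₁) k n₁ ≤ (y:ℝ) * KSth (C*ε₁) k m := by
      linarith only [b1, b2, mul_le_mul_of_nonneg_left b3 hy0.le]
    have c2 : (n₂:ℝ) * KSth (C*ε₁) k n₂ ≤ ((m:ℝ) - y) * KSth (C*ε₁) k m := by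
      have h := mul_le_mul_of_nonneg_left b4 (show (0:ℝ) ≤ (n₂:ℝ) by positivity)
      calc (n₂:ℝ) * KSth (C*ε₁) k n₂ ≤ (n₂:ℝ) * KSth (C*ε₁) k m := h
        _ = ((m:ℝ) - y) * KSth (C*ε₁) k m := by rw [hn₂R]
    have c3 : (n₁:ℝ) * KSth (C*ε₁) k n₁ + (n₂:ℝ) * KSth (C*ε₁) k n₂ ≤
        (m:ℝ) * KSth (C*ε₁) k m := by linarith only [c1, c2]
    have hsplitR : (eCnt G S : ℝ) ≤ (eCnt G (X' ∪ N') : ℝ) + eCnt G (S \ X') := by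
      exact_mod_cast hsplit
    linarith only [he₁, he₂, hSineq, hsplitR,
      mul_le_mul_of_nonneg_left c3 (show (0:ℝ) ≤ d/2 by linarith only [hd])]
  · -- average degree
    rw [havg, le_div_iff₀ hm0]
    have hge := KSth_ge hcnn k (m:ℝ)
    nlinarith [hSineq, hd.le, mul_le_mul_of_nonneg_left hge
      (show (0:ℝ) ≤ d * m by positivity)]
  · -- min degree
    intro v hv
    have hvS : v ∈ S := hv
    by_contra hlt
    push_neg at hlt
    rw [havg] at hlt
    have hdegeq : ((((⊤ : G.Subgraph).induce S).neighborSet v).ncard : ℝ)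
        = (((⊤ : G.Subgraph).induce S).degree v : ℝ) := by
      norm_cast
      rw [Subgraph.degree, ← Nat.card_eq_fintype_card]
      exact Nat.card_coe_set_eq _
    have hdropR : (eCnt G S : ℝ) ≤ (eCnt G (S \ {v}) : ℝ)
        + (((⊤ : G.Subgraph).induce S).degree v : ℝ) := by
      rw [← hdegeq]
      exact_mod_cast eDrop G S v
    have hlt' : (((⊤ : G.Subgraph).induce S).degree v : ℝ) * m < eCnt G S := by
      rw [show (2 * ((eCnt G S : ℝ)) / ↑m) / 2 = (eCnt G S : ℝ) / m by ring] at hlt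
      have h := (lt_div_iff₀ hm0).mp hlt
      refine lt_of_le_of_lt (le_of_eq ?_) h
      congr
      exact Subsingleton.elim _ _
    have hcard' : (S \ {v}).ncard = m - 1 := by
      rw [Set.ncard_diff_singleton_of_mem hvS, hScard]
    have hS'ne : (S \ {v}).Nonempty := by
      apply (Set.ncard_pos (Set.toFinite _)).mp
      omega
    have hQ' : Q (m-1) := by
      refine ⟨S \ {v}, hS'ne, ?_, hcard'⟩
      have hcast : ((m - 1 : ℕ) : ℝ) = (m:ℝ) - 1 := by
        push_cast [hx1]
        ring
      rw [hcast]
      have hmono := KSth_mono hcnn hk (show (m:ℝ)-1 ≤ (m:ℝ) by linarith)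
      have k3 : ((m:ℝ)-1) * (d/2 * m * KSth (C*ε₁) k m) ≤ ((m:ℝ)-1) * (eCnt G S) :=
        mul_le_mul_of_nonneg_left hSineq (by linarith)
      have k4 : (m:ℝ) * (d/2 * ((m:ℝ)-1) * KSth (C*ε₁) k m)
          < (m:ℝ) * (eCnt G (S \ {v})) := by
        nlinarith [k3, mul_le_mul_of_nonneg_left hdropR hm0.le, hlt']
      have k5 : d/2 * ((m:ℝ)-1) * KSth (C*ε₁) k m < eCnt G (S \ {v}) :=
        lt_of_mul_lt_mul_left k4 hm0.le
      nlinarith [k5, mul_le_mul_of_nonneg_left hmono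
        (show (0:ℝ) ≤ d/2*((m:ℝ)-1) by nlinarith [hd.le])]
    exact hmin (m-1) (by omega) hQ'


end HamSubsets
end
end

section
/- For every 0 < ε₁ < 1 and every n ≥ 60 the following holds. Let G be an n-vertex (ε₁, 15)-expander. For any set W ⊆ V(G) with |W| ≤ ε₁·n/(20·(log n)²), there exist a vertex v ∈ V(G) \ W and a radius r ≤ (20/ε₁)·(log n)³ such that the ball of radius r around v in the graph G − W has size at least n/10. -/
open scoped Classical

noncomputable section

namespace HamSubsets

open SimpleGraph

variable {V : Type*}

private lemma mem_ball_self' {V' : Type*} (H : SimpleGraph V') (v : V') (r : ℕ) :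
    v ∈ ball H v r :=
  ⟨SimpleGraph.Walk.nil, by simp⟩

private lemma ball_mono' {V' : Type*} (H : SimpleGraph V') (v : V') {r s : ℕ} (h : r ≤ s) :
    ball H v r ⊆ ball H v s := by
  rintro u ⟨w, hw⟩
  exact ⟨w, hw.trans h⟩

private lemma adj_mem_ball' {V' : Type*} {H : SimpleGraph V'} {v x y : V'} {r : ℕ}
    (hx : x ∈ ball H v r) (hxy : H.Adj x y) : y ∈ ball H v (r + 1) := by
  obtain ⟨w, hw⟩ := hx
  refine ⟨w.concat hxy, ?_⟩
  rw [SimpleGraph.Walk.length_concat]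
  omega

/-- The external neighbourhood inside a graph, used as an auxiliary notion. -/
private abbrev nbhd' {V' : Type*} (H : SimpleGraph V') (X : Set V') : Set V' :=
  {y | y ∉ X ∧ ∃ x ∈ X, H.Adj x y}

private lemma exists_cheap_radius {V' : Type*} [Fintype V'] (H : SimpleGraph V') (u : V')
    (X : Set V') (θ : ℝ) (R : ℕ) (N : ℝ) (hθ : 0 < θ)
    (hN : ∀ r : ℕ, ((ball H u r \ X).ncard : ℝ) ≤ N)
    (hu : u ∉ X) (hgrowth : N < (1 + θ) ^ R) :
    ∃ r : ℕ, r + 1 ≤ R ∧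
      (((ball H u (r + 1) \ X).ncard : ℝ) ≤ (1 + θ) * ((ball H u r \ X).ncard : ℝ)) := by
  by_contra hch
  push_neg at hch
  have hc0 : (1 : ℝ) ≤ ((ball H u 0 \ X).ncard : ℝ) := by
    have h6 : (ball H u 0 \ X).Nonempty := ⟨u, ⟨mem_ball_self' H u 0, hu⟩⟩
    have h7 := (Set.ncard_pos (Set.toFinite _)).mpr h6
    exact_mod_cast h7
  have hgrow : ∀ r : ℕ, r ≤ R → ((1 + θ) ^ r : ℝ) ≤ ((ball H u r \ X).ncard : ℝ) := by
    intro r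
    induction r with
    | zero => intro _; simpa using hc0
    | succ k ih =>
      intro hk
      have h8 := ih (by omega)
      have h9 := hch k (by omega)
      have h10 : (0 : ℝ) ≤ 1 + θ := by linarith
      calc ((1 + θ) ^ (k + 1) : ℝ) = (1 + θ) * (1 + θ) ^ k := by ring
      _ ≤ (1 + θ) * ((ball H u k \ X).ncard : ℝ) := by nlinarith
      _ ≤ ((ball H u (k + 1) \ X).ncard : ℝ) := le_of_lt h9
  linarith [hgrow R le_rfl, hN R]

private lemma step_lemma {V' : Type*} [Fintype V'] {H : SimpleGraph V'} {θ a b : ℝ} {R : ℕ}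
    (hθ : 0 < θ)
    (hball : ∀ (v : V') (r : ℕ), r ≤ R → (((ball H v r).ncard : ℝ)) < b)
    (hgrowth : ((Fintype.card V' : ℝ)) < (1 + θ) ^ R)
    (ha : a ≤ (Fintype.card V' : ℝ))
    (X : Set V') (hX : ((nbhd' H X).ncard : ℝ) ≤ θ * X.ncard) (hXa : (X.ncard : ℝ) < a) :
    ∃ X' : Set V', ((nbhd' H X').ncard : ℝ) ≤ θ * X'.ncard ∧ X.ncard < X'.ncard ∧
      (X'.ncard : ℝ) < a + b := by
  have hcardeq : ((Set.univ : Set V').ncard : ℝ) = (Fintype.card V' : ℝ) := by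
    rw [Set.ncard_univ, Nat.card_eq_fintype_card]
  -- find a vertex outside `X`
  have hune : ∃ u : V', u ∉ X := by
    by_contra hall
    push_neg at hall
    have hXu : X = Set.univ := Set.eq_univ_of_forall hall
    rw [hXu] at hXa
    rw [hcardeq] at hXa
    linarith
  obtain ⟨u, hu⟩ := hune
  have hN : ∀ r : ℕ, ((ball H u r \ X).ncard : ℝ) ≤ (Fintype.card V' : ℝ) := by
    intro r
    have h11 := Set.ncard_le_ncard (Set.subset_univ (ball H u r \ X)) (Set.toFinite _)
    calc ((ball H u r \ X).ncard : ℝ) ≤ ((Set.univ : Set V').ncard : ℝ) := by exact_mod_cast h11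
    _ = (Fintype.card V' : ℝ) := hcardeq
  obtain ⟨r, hrR, hcheap⟩ :=
    exists_cheap_radius H u X θ R (Fintype.card V') hθ hN hu hgrowth
  -- the new set is `X ∪ B`
  have hXcard : (X ∪ ball H u r).ncard = X.ncard + (ball H u r \ X).ncard := by
    have h15 : X ∪ ball H u r = X ∪ (ball H u r \ X) := by rw [Set.union_diff_self]
    rw [h15, Set.ncard_union_eq Set.disjoint_sdiff_right (Set.toFinite _) (Set.toFinite _)]
  have hpos : 1 ≤ (ball H u r \ X).ncard := by
    have h6 : (ball H u r \ X).Nonempty := ⟨u, ⟨mem_ball_self' H u r, hu⟩⟩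
    exact (Set.ncard_pos (Set.toFinite _)).mpr h6
  refine ⟨X ∪ ball H u r, ?_, by omega, ?_⟩
  · -- boundary control
    set D : Set V' := ball H u (r + 1) \ (X ∪ ball H u r) with hD_def
    have hsub : nbhd' H (X ∪ ball H u r) ⊆ nbhd' H X ∪ D := by
      rintro y ⟨hyX', x, hxX', hadj⟩
      rcases hxX' with hx | hx
      · exact Or.inl ⟨fun h => hyX' (Or.inl h), x, hx, hadj⟩
      · exact Or.inr ⟨adj_mem_ball' hx hadj, hyX'⟩
    have hsplit : (ball H u (r + 1)) \ X = ((ball H u r) \ X) ∪ D := by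
      ext y
      constructor
      · rintro ⟨hy1, hy2⟩
        by_cases hyB : y ∈ ball H u r
        · exact Or.inl ⟨hyB, hy2⟩
        · exact Or.inr ⟨hy1, fun h => h.elim hy2 hyB⟩
      · rintro (⟨hy1, hy2⟩ | ⟨hy1, hy2⟩)
        · exact ⟨ball_mono' H u (Nat.le_succ r) hy1, hy2⟩
        · exact ⟨hy1, fun h => hy2 (Or.inl h)⟩
    have hdisj : Disjoint ((ball H u r) \ X) D := by
      rw [Set.disjoint_left]
      rintro y ⟨hy1, _⟩ ⟨_, hy2⟩
      exact hy2 (Or.inr hy1)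
    have hcount : (ball H u (r + 1) \ X).ncard = (ball H u r \ X).ncard + D.ncard := by
      rw [hsplit]
      exact Set.ncard_union_eq hdisj (Set.toFinite _) (Set.toFinite _)
    have hDle : (D.ncard : ℝ) ≤ θ * ((ball H u r \ X).ncard : ℝ) := by
      have h16 : ((ball H u (r + 1) \ X).ncard : ℝ) =
          ((ball H u r \ X).ncard : ℝ) + (D.ncard : ℝ) := by exact_mod_cast hcount
      linarith [hcheap]
    have hXcardR : ((X ∪ ball H u r).ncard : ℝ) =
        (X.ncard : ℝ) + ((ball H u r \ X).ncard : ℝ) := by exact_mod_cast hXcard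
    calc ((nbhd' H (X ∪ ball H u r)).ncard : ℝ) ≤ ((nbhd' H X ∪ D).ncard : ℝ) := by
          exact_mod_cast Set.ncard_le_ncard hsub (Set.toFinite _)
    _ ≤ ((nbhd' H X).ncard : ℝ) + (D.ncard : ℝ) := by exact_mod_cast Set.ncard_union_le _ _
    _ ≤ θ * (X.ncard : ℝ) + θ * ((ball H u r \ X).ncard : ℝ) := by linarith
    _ = θ * ((X ∪ ball H u r).ncard : ℝ) := by rw [hXcardR]; ring
  · -- cardinality bound
    have h17 : ((ball H u r \ X).ncard : ℝ) < b := by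
      have h18 : (ball H u r \ X).ncard ≤ (ball H u r).ncard :=
        Set.ncard_le_ncard Set.diff_subset (Set.toFinite _)
      have h19 := hball u r (by omega)
      have h20 : ((ball H u r \ X).ncard : ℝ) ≤ ((ball H u r).ncard : ℝ) := by exact_mod_cast h18
      linarith
    have h21 : ((X ∪ ball H u r).ncard : ℝ) =
        (X.ncard : ℝ) + ((ball H u r \ X).ncard : ℝ) := by exact_mod_cast hXcard
    linarith

set_option maxHeartbeats 1000000 in
/-- **Lemma (large balls in expanders, robustly)**. For `0 < ε₁ < 1` and `n ≥ 60`, if `G` is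
an `n`-vertex `(ε₁, 15)`-expander and `W ⊆ V(G)` has `|W| ≤ ε₁ n / (20 (log n)²)`, then
there is a ball in `G - W` of size at least `n/10` and radius at most `(20/ε₁)(log n)³`. -/
theorem exists_large_ball (ε₁ : ℝ) (h0 : 0 < ε₁) (h1 : ε₁ < 1)
    {V : Type*} [Fintype V] (G : SimpleGraph V) (hn : 60 ≤ Fintype.card V)
    (hG : IsExpander G ε₁ 15) (W : Set V)
    (hW : (W.ncard : ℝ) ≤ ε₁ * (Fintype.card V : ℝ) /
      (20 * (Real.log (Fintype.card V)) ^ 2)) :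
    ∃ (v : ↥Wᶜ) (r : ℕ), (r : ℝ) ≤ (20 / ε₁) * (Real.log (Fintype.card V)) ^ 3 ∧
      (Fintype.card V : ℝ) / 10 ≤ ((ball (G.induce Wᶜ) v r).ncard : ℝ) := by
  classical
  by_contra hcon
  push_neg at hcon
  set n : ℕ := Fintype.card V with hn_def
  set L : ℝ := Real.log n with hL_def
  set H : SimpleGraph ↥Wᶜ := G.induce Wᶜ with hH_def
  have hn60 : (60 : ℝ) ≤ (n : ℝ) := by exact_mod_cast hn
  have hn0 : (0 : ℝ) < (n : ℝ) := by linarith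
  have hL1 : 1 < L := by
    rw [hL_def, Real.lt_log_iff_exp_lt hn0]
    calc Real.exp 1 < 2.7182818286 := Real.exp_one_lt_d9
    _ ≤ (n : ℝ) := by linarith
  have hL0 : (0 : ℝ) < L := by linarith
  have hL2pos : (0 : ℝ) < L ^ 2 := by positivity
  have hL2ge : (1 : ℝ) ≤ L ^ 2 := by nlinarith
  have hLne : L ≠ 0 := ne_of_gt hL0
  have hEne : ε₁ ≠ 0 := ne_of_gt h0
  set θ : ℝ := ε₁ / (5 * L ^ 2) with hθ_def
  have hθpos : 0 < θ := by rw [hθ_def]; exact div_pos h0 (by positivity)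
  have hθ1 : θ ≤ 1 := by
    rw [hθ_def, div_le_one (by positivity)]
    nlinarith
  set R : ℕ := ⌊20 / ε₁ * L ^ 3⌋₊ with hR_def
  have hbudget : (0 : ℝ) ≤ 20 / ε₁ * L ^ 3 := by positivity
  -- the smallness hypothesis on balls, rephrased
  have hball : ∀ (v : ↥Wᶜ) (r : ℕ), r ≤ R →
      ((ball H v r).ncard : ℝ) < (n : ℝ) / 10 := by
    intro v r hr
    have h2 : (r : ℝ) ≤ 20 / ε₁ * L ^ 3 := by
      calc (r : ℝ) ≤ (R : ℝ) := by exact_mod_cast hr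
      _ ≤ 20 / ε₁ * L ^ 3 := by rw [hR_def]; exact Nat.floor_le hbudget
    exact hcon v r h2
  -- bound on the size of W
  have hWn : (W.ncard : ℝ) ≤ (n : ℝ) / 20 := by
    have h3 : ε₁ * (n : ℝ) / (20 * L ^ 2) ≤ (n : ℝ) / 20 := by
      rw [div_le_div_iff₀ (by positivity) (by norm_num)]
      nlinarith
    exact hW.trans h3
  -- cardinality of the complement of W
  have hWc : ((Fintype.card ↥Wᶜ : ℕ) : ℝ) + (W.ncard : ℝ) = (n : ℝ) := by
    have h1n : W.ncard + Wᶜ.ncard = n := by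
      rw [Set.ncard_add_ncard_compl W, Nat.card_eq_fintype_card]
    have h2n : Fintype.card ↥Wᶜ = Wᶜ.ncard := by
      rw [← Nat.card_coe_set_eq, Nat.card_eq_fintype_card]
    have h3n : Fintype.card ↥Wᶜ + W.ncard = n := by omega
    exact_mod_cast h3n
  have hcardWc : ((Fintype.card ↥Wᶜ : ℕ) : ℝ) ≤ (n : ℝ) := by
    have := W.ncard.cast_nonneg (α := ℝ)
    linarith
  have ha : (n : ℝ) / 5 ≤ ((Fintype.card ↥Wᶜ : ℕ) : ℝ) := by linarith
  -- growth estimate: (1+θ)^R exceeds n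
  have hgrowthC : ((Fintype.card ↥Wᶜ : ℕ) : ℝ) < (1 + θ) ^ R := by
    have hlog1θ : θ / 2 ≤ Real.log (1 + θ) := by
      have h11 : (0 : ℝ) < 1 + θ := by linarith
      have h12 := Real.one_sub_inv_le_log_of_pos h11
      have h13 : θ / (1 + θ) = 1 - (1 + θ)⁻¹ := by field_simp; ring
      have h14 : θ / 2 ≤ θ / (1 + θ) := by
        rw [div_le_div_iff₀ (by norm_num) h11]
        nlinarith
      linarith
    have hRge : 20 / ε₁ * L ^ 3 - 1 ≤ (R : ℝ) := by
      rw [hR_def]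
      have h22 := Nat.lt_floor_add_one (20 / ε₁ * L ^ 3)
      linarith
    have hRpos : (0 : ℝ) ≤ (R : ℝ) := Nat.cast_nonneg R
    have e2 : 20 / ε₁ * L ^ 3 * (θ / 2) = 2 * L := by
      rw [hθ_def]
      field_simp
      ring
    have e3 : (20 / ε₁ * L ^ 3 - 1) * (θ / 2) = 20 / ε₁ * L ^ 3 * (θ / 2) - θ / 2 := by ring
    have e4 : (20 / ε₁ * L ^ 3 - 1) * (θ / 2) ≤ (R : ℝ) * (θ / 2) :=
      mul_le_mul_of_nonneg_right hRge (by linarith)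
    have e5 : (R : ℝ) * (θ / 2) ≤ (R : ℝ) * Real.log (1 + θ) :=
      mul_le_mul_of_nonneg_left hlog1θ hRpos
    have hRlogn : L < (R : ℝ) * Real.log (1 + θ) := by
      have : 2 * L - θ / 2 ≤ (R : ℝ) * (θ / 2) := by linarith [e2, e3, e4]
      nlinarith
    have hlt : (n : ℝ) < (1 + θ) ^ R := by
      have hp1 : (0 : ℝ) < (1 + θ) ^ R := by positivity
      have hpow : Real.log ((1 + θ) ^ R) = (R : ℝ) * Real.log (1 + θ) :=
        Real.log_pow (1 + θ) R
      have hloglt : Real.log (n : ℝ) < Real.log ((1 + θ) ^ R) := by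
        rw [hpow, ← hL_def]
        exact hRlogn
      exact (Real.log_lt_log_iff hn0 hp1).mp hloglt
    linarith
  -- iterate the key step
  have main : ∀ k : ℕ, ∀ X : Set ↥Wᶜ, ((nbhd' H X).ncard : ℝ) ≤ θ * X.ncard →
      (X.ncard : ℝ) < (n : ℝ) / 5 → (n : ℝ) / 5 ≤ (X.ncard : ℝ) + (k : ℝ) →
      ∃ Y : Set ↥Wᶜ, ((nbhd' H Y).ncard : ℝ) ≤ θ * Y.ncard ∧
        (n : ℝ) / 5 ≤ (Y.ncard : ℝ) ∧ ((Y.ncard : ℝ) < (n : ℝ) / 5 + (n : ℝ) / 10) := by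
    intro k
    induction k with
    | zero =>
      intro X h1' h2' h3'
      exfalso
      push_cast at h3'
      linarith
    | succ k ih =>
      intro X h1' h2' h3'
      obtain ⟨X', hb', hlt, hsz⟩ := step_lemma hθpos hball hgrowthC ha X h1' h2'
      by_cases hc : (X'.ncard : ℝ) < (n : ℝ) / 5
      · apply ih X' hb' hc
        have h20 : (X.ncard : ℝ) + 1 ≤ (X'.ncard : ℝ) := by exact_mod_cast hlt
        push_cast at h3' ⊢
        linarith
      · exact ⟨X', hb', le_of_not_gt hc, hsz⟩
  have hstart1 : ((nbhd' H (∅ : Set ↥Wᶜ)).ncard : ℝ) ≤ θ * (∅ : Set ↥Wᶜ).ncard := by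
    have hemp : nbhd' H (∅ : Set ↥Wᶜ) = ∅ := by
      ext y
      simp [nbhd']
    rw [hemp]
    simp
  have hstart2 : (((∅ : Set ↥Wᶜ).ncard : ℕ) : ℝ) < (n : ℝ) / 5 := by
    rw [Set.ncard_empty]
    push_cast
    linarith
  have hstart3 : (n : ℝ) / 5 ≤ (((∅ : Set ↥Wᶜ).ncard : ℕ) : ℝ) + ((n : ℕ) : ℝ) := by
    rw [Set.ncard_empty]
    push_cast
    linarith
  obtain ⟨Y, hYbd, hYlo, hYhi⟩ := main n ∅ hstart1 hstart2 hstart3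
  -- apply the expander hypothesis to the image of Y in V
  have hYcard : (Subtype.val '' Y).ncard = Y.ncard :=
    Set.ncard_image_of_injective Y Subtype.coe_injective
  have h7a : (15 : ℝ) / 2 ≤ ((Subtype.val '' Y).ncard : ℝ) := by
    rw [hYcard]; linarith
  have h8a : ((Subtype.val '' Y).ncard : ℝ) ≤ (n : ℝ) / 2 := by
    rw [hYcard]; linarith
  have hexp := hG (Subtype.val '' Y) h7a h8a
  -- evaluate epsFun
  have hY1 : (1 : ℝ) < ((Subtype.val '' Y).ncard : ℝ) := by rw [hYcard]; linarith
  have hYn : ((Subtype.val '' Y).ncard : ℝ) ≤ (n : ℝ) := by rw [hYcard]; linarith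
  have hcond : ¬(((Subtype.val '' Y).ncard : ℝ) < 15 / 5) := by
    push_neg
    rw [hYcard]
    linarith
  have heps : epsFun ε₁ 15 ((Subtype.val '' Y).ncard : ℝ) =
      ε₁ / (Real.log ((Subtype.val '' Y).ncard : ℝ)) ^ 2 := by
    simp only [epsFun]
    rw [if_neg hcond,
      show (15 : ℝ) * ((Subtype.val '' Y).ncard : ℝ) / 15 = ((Subtype.val '' Y).ncard : ℝ)
        by ring]
  have hlogY0 : 0 < Real.log ((Subtype.val '' Y).ncard : ℝ) := Real.log_pos hY1
  have hlogYL : Real.log ((Subtype.val '' Y).ncard : ℝ) ≤ L := by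
    rw [hL_def]
    exact Real.log_le_log (by linarith) hYn
  have hsq : (Real.log ((Subtype.val '' Y).ncard : ℝ)) ^ 2 ≤ L ^ 2 := by nlinarith
  have hlogY2pos : (0 : ℝ) < (Real.log ((Subtype.val '' Y).ncard : ℝ)) ^ 2 := by positivity
  -- lower bound on the expansion
  have h_a : ε₁ / L ^ 2 ≤ ε₁ / (Real.log ((Subtype.val '' Y).ncard : ℝ)) ^ 2 := by
    rw [div_le_div_iff₀ hL2pos hlogY2pos]
    nlinarith
  have hY5 : (n : ℝ) / 5 ≤ ((Subtype.val '' Y).ncard : ℝ) := by rw [hYcard]; linarith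
  have hlow : ε₁ / L ^ 2 * ((n : ℝ) / 5) ≤
      epsFun ε₁ 15 ((Subtype.val '' Y).ncard : ℝ) * ((Subtype.val '' Y).ncard : ℝ) := by
    rw [heps]
    have hnonneg : (0 : ℝ) ≤ ε₁ / (Real.log ((Subtype.val '' Y).ncard : ℝ)) ^ 2 := by positivity
    calc ε₁ / L ^ 2 * ((n : ℝ) / 5)
        ≤ ε₁ / (Real.log ((Subtype.val '' Y).ncard : ℝ)) ^ 2 * ((n : ℝ) / 5) :=
          mul_le_mul_of_nonneg_right h_a (by linarith)
    _ ≤ ε₁ / (Real.log ((Subtype.val '' Y).ncard : ℝ)) ^ 2 * ((Subtype.val '' Y).ncard : ℝ) :=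
          mul_le_mul_of_nonneg_left hY5 hnonneg
  -- upper bound on the neighbourhood
  have hup : ((extNbhd G (Subtype.val '' Y)).ncard : ℝ) ≤
      (W.ncard : ℝ) + ((nbhd' H Y).ncard : ℝ) := by
    have hsub2 : extNbhd G (Subtype.val '' Y) ⊆ W ∪ (Subtype.val '' nbhd' H Y) := by
      rintro y ⟨hyY', x, hxY', hadj⟩
      by_cases hyW : y ∈ W
      · exact Or.inl hyW
      · right
        obtain ⟨xx, hxxY, hxxe⟩ := hxY'
        have hy' : y ∈ Wᶜ := hyW
        refine ⟨⟨y, hy'⟩, ⟨?_, ⟨xx, hxxY, ?_⟩⟩, rfl⟩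
        · intro hyY
          exact hyY' ⟨⟨y, hy'⟩, hyY, rfl⟩
        · rw [hH_def]
          show G.Adj ((xx : V)) y
          rw [hxxe]
          exact hadj
    calc ((extNbhd G (Subtype.val '' Y)).ncard : ℝ)
        ≤ ((W ∪ (Subtype.val '' nbhd' H Y)).ncard : ℝ) := by
          exact_mod_cast Set.ncard_le_ncard hsub2 (Set.toFinite _)
    _ ≤ (W.ncard : ℝ) + ((Subtype.val '' nbhd' H Y).ncard : ℝ) := by
          exact_mod_cast Set.ncard_union_le _ _
    _ = (W.ncard : ℝ) + ((nbhd' H Y).ncard : ℝ) := by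
          rw [Set.ncard_image_of_injective _ Subtype.coe_injective]
  -- assemble the contradiction
  have hYsize : (Y.ncard : ℝ) ≤ 3 * (n : ℝ) / 10 := by linarith
  have hYbd2 : θ * (Y.ncard : ℝ) ≤ θ * (3 * (n : ℝ) / 10) :=
    mul_le_mul_of_nonneg_left hYsize (le_of_lt hθpos)
  have hchain : ε₁ / L ^ 2 * ((n : ℝ) / 5) ≤
      ε₁ * (n : ℝ) / (20 * L ^ 2) + θ * (3 * (n : ℝ) / 10) := by
    calc ε₁ / L ^ 2 * ((n : ℝ) / 5)
        ≤ epsFun ε₁ 15 ((Subtype.val '' Y).ncard : ℝ) * ((Subtype.val '' Y).ncard : ℝ) := hlow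
    _ ≤ ((extNbhd G (Subtype.val '' Y)).ncard : ℝ) := hexp
    _ ≤ (W.ncard : ℝ) + ((nbhd' H Y).ncard : ℝ) := hup
    _ ≤ ε₁ * (n : ℝ) / (20 * L ^ 2) + θ * (3 * (n : ℝ) / 10) := by
          have := hYbd.trans hYbd2
          linarith [hW]
  have a1 : ε₁ / L ^ 2 * ((n : ℝ) / 5) = (ε₁ * (n : ℝ) / L ^ 2) / 5 := by ring
  have a2 : ε₁ * (n : ℝ) / (20 * L ^ 2) = (ε₁ * (n : ℝ) / L ^ 2) / 20 := by ring
  have a3 : θ * (3 * (n : ℝ) / 10) = 3 * (ε₁ * (n : ℝ) / L ^ 2) / 50 := by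
    rw [hθ_def]; ring
  have hP : (0 : ℝ) < ε₁ * (n : ℝ) / L ^ 2 := div_pos (mul_pos h0 hn0) hL2pos
  rw [a1, a2, a3] at hchain
  linarith

end HamSubsets
end
end

section
/- (Expander mixing lemma.) Let G be an (n,d,λ)-graph and let X, Y ⊆ V(G) be two vertex subsets. Then |e(X,Y) − (d/n)·|X|·|Y|| ≤ λ·√(|X|·|Y|·(1 − |X|/n)·(1 − |Y|/n)), where e(X,Y) denotes the number of ordered pairs (x,y) with x ∈ X, y ∈ Y and xy an edge of G. -/
open scoped Classical

noncomputable section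

namespace HamSubsets

open SimpleGraph

variable {V : Type*}

set_option maxHeartbeats 1000000 in
lemma bilin_bound {V : Type*} [Fintype V] (G : SimpleGraph V) (d : ℕ) {lam : ℝ}
    (hlam : 0 ≤ lam) (hreg : G.IsRegularOfDegree d)
    (hspec : ∀ (μ : ℝ) (f : V → ℝ), f ≠ 0 → (∑ v, f v) = 0 →
      (∀ v, (∑ u, if G.Adj v u then f u else 0) = μ * f v) → |μ| ≤ lam)
    (f g : V → ℝ) (hf : ∑ v, f v = 0) (hg : ∑ v, g v = 0) :
    |∑ v, ∑ u, (if G.Adj v u then f v * g u else 0)| ≤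
      lam * (Real.sqrt (∑ v, f v ^ 2) * Real.sqrt (∑ v, g v ^ 2)) := by
  classical
  let T : EuclideanSpace ℝ V →ₗ[ℝ] EuclideanSpace ℝ V :=
    { toFun := fun x => WithLp.toLp 2 (fun v => ∑ u, if G.Adj v u then x u else 0)
      map_add' := by
        intro x y; ext v
        show (∑ u, if G.Adj v u then (x u + y u) else 0) = _
        show _ = (∑ u, if G.Adj v u then x u else 0) + ∑ u, if G.Adj v u then y u else 0
        rw [← Finset.sum_add_distrib]
        exact Finset.sum_congr rfl fun u _ => by split_ifs <;> simp
      map_smul' := by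
        intro c x; ext v
        show (∑ u, if G.Adj v u then c * x u else 0) = c * ∑ u, if G.Adj v u then x u else 0
        rw [Finset.mul_sum]
        exact Finset.sum_congr rfl fun u _ => by split_ifs <;> simp }
  have Tapp : ∀ (x : EuclideanSpace ℝ V) (v : V),
      T x v = ∑ u, if G.Adj v u then x u else 0 := fun x v => rfl
  let S : EuclideanSpace ℝ V →ₗ[ℝ] ℝ :=
    { toFun := fun x => ∑ v, x v
      map_add' := fun x y => Finset.sum_add_distrib
      map_smul' := fun c x => by simp [Finset.mul_sum] }
  have hcol : ∀ u, ∑ v, (if G.Adj v u then (1:ℝ) else 0) = d := by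
    intro u
    rw [Finset.sum_boole]
    have : (Finset.univ.filter fun v => G.Adj v u) = G.neighborFinset u := by
      ext v; simp [SimpleGraph.adj_comm]
    rw [this]
    norm_cast
    exact hreg u
  have hrow : ∀ v, ∑ u, (if G.Adj v u then (1:ℝ) else 0) = d := by
    intro v
    rw [Finset.sum_boole]
    have : (Finset.univ.filter fun u => G.Adj v u) = G.neighborFinset v := by
      ext u; simp
    rw [this]
    norm_cast
    exact hreg v
  have hinv : ∀ x ∈ LinearMap.ker S, T x ∈ LinearMap.ker S := by
    intro x hx
    simp only [LinearMap.mem_ker] at hx ⊢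
    have hx' : ∑ v, x v = 0 := hx
    show ∑ v, T x v = 0
    calc ∑ v, T x v = ∑ v, ∑ u, (if G.Adj v u then x u else 0) := rfl
      _ = ∑ u, ∑ v, (if G.Adj v u then x u else 0) := Finset.sum_comm
      _ = ∑ u, (∑ v, (if G.Adj v u then (1:ℝ) else 0)) * x u := by
            refine Finset.sum_congr rfl fun u _ => ?_
            rw [Finset.sum_mul]
            exact Finset.sum_congr rfl fun v _ => by split_ifs <;> simp
      _ = ∑ u, (d:ℝ) * x u := by simp_rw [hcol]
      _ = 0 := by rw [← Finset.mul_sum, hx', mul_zero]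
  have hTsym : T.IsSymmetric := by
    intro x y
    simp only [PiLp.inner_apply, RCLike.inner_apply, conj_trivial]
    rw [Finset.sum_congr rfl fun v _ => mul_comm (y v) (T x v),
      Finset.sum_congr rfl fun v _ => mul_comm (T y v) (x v)]
    calc ∑ v, (T x v) * y v = ∑ v, ∑ u, (if G.Adj v u then x u * y v else 0) := by
          refine Finset.sum_congr rfl fun v _ => ?_
          rw [Tapp, Finset.sum_mul]
          exact Finset.sum_congr rfl fun u _ => by split_ifs <;> simp
      _ = ∑ u, ∑ v, (if G.Adj v u then x u * y v else 0) := Finset.sum_comm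
      _ = ∑ v, (x v) * (T y v) := by
          refine Finset.sum_congr rfl fun u _ => ?_
          rw [Tapp, Finset.mul_sum]
          refine Finset.sum_congr rfl fun v _ => ?_
          have : G.Adj v u ↔ G.Adj u v := G.adj_comm v u
          split_ifs <;> simp_all
  let W := LinearMap.ker S
  let Tr : W →ₗ[ℝ] W := T.restrict hinv
  have hTr : Tr.IsSymmetric := fun x y =>
    hTsym (x : EuclideanSpace ℝ V) (y : EuclideanSpace ℝ V)
  let N := Module.finrank ℝ W
  let b := hTr.eigenvectorBasis (rfl : Module.finrank ℝ W = N)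
  let μ := hTr.eigenvalues (rfl : Module.finrank ℝ W = N)
  have heig : ∀ i, Tr (b i) = μ i • b i := by
    intro i
    exact hTr.apply_eigenvectorBasis (rfl : Module.finrank ℝ W = N) i
  have hmu : ∀ i, |μ i| ≤ lam := by
    intro i
    have h1 : b i ≠ 0 := by
      have := b.toBasis.ne_zero i
      rwa [OrthonormalBasis.coe_toBasis] at this
    have hb0 : (b i : EuclideanSpace ℝ V) ≠ 0 := fun h => h1 (Subtype.ext h)
    have heq : T ((b i : EuclideanSpace ℝ V)) = μ i • (b i : EuclideanSpace ℝ V) :=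
      congrArg Subtype.val (heig i)
    refine hspec (μ i) (fun v => (b i : EuclideanSpace ℝ V) v) ?_ ?_ ?_
    · intro h0
      exact hb0 (by ext v; exact congrFun h0 v)
    · have h2 := (b i).2
      rw [LinearMap.mem_ker] at h2
      exact h2
    · intro v
      calc (∑ u, if G.Adj v u then (b i : EuclideanSpace ℝ V) u else 0)
          = T (b i : EuclideanSpace ℝ V) v := rfl
        _ = (μ i • (b i : EuclideanSpace ℝ V)) v := by rw [heq]
        _ = μ i * (b i : EuclideanSpace ℝ V) v := rfl
  have hfW : WithLp.toLp 2 f ∈ LinearMap.ker S := by rw [LinearMap.mem_ker]; exact hf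
  have hgW : WithLp.toLp 2 g ∈ LinearMap.ker S := by rw [LinearMap.mem_ker]; exact hg
  let F : W := ⟨WithLp.toLp 2 f, hfW⟩
  let Gw : W := ⟨WithLp.toLp 2 g, hgW⟩
  have hinner : (inner ℝ F (Tr Gw) : ℝ) = ∑ v, ∑ u, (if G.Adj v u then f v * g u else 0) := by
    have h0 : (inner ℝ F (Tr Gw) : ℝ) = ∑ v, f v * (T (WithLp.toLp 2 g) v) := by
      simp only [Submodule.coe_inner, PiLp.inner_apply, RCLike.inner_apply, conj_trivial]
      exact Finset.sum_congr rfl fun v _ => mul_comm _ _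
    rw [h0]
    refine Finset.sum_congr rfl fun v _ => ?_
    rw [Tapp, Finset.mul_sum]
    exact Finset.sum_congr rfl fun u _ => by split_ifs <;> simp
  have hnF : ‖F‖ = Real.sqrt (∑ v, f v ^ 2) := by
    have h0 : ‖F‖ = ‖(F : EuclideanSpace ℝ V)‖ := rfl
    rw [h0, EuclideanSpace.norm_eq]
    congr 1
    exact Finset.sum_congr rfl fun v _ => by rw [Real.norm_eq_abs, sq_abs]
  have hnG : ‖Gw‖ = Real.sqrt (∑ v, g v ^ 2) := by
    have h0 : ‖Gw‖ = ‖(Gw : EuclideanSpace ℝ V)‖ := rfl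
    rw [h0, EuclideanSpace.norm_eq]
    congr 1
    exact Finset.sum_congr rfl fun v _ => by rw [Real.norm_eq_abs, sq_abs]
  have key : |(inner ℝ F (Tr Gw) : ℝ)| ≤ lam * (‖F‖ * ‖Gw‖) := by
    have hexp : (inner ℝ F (Tr Gw) : ℝ)
        = ∑ i, μ i * ((inner ℝ (b i) F : ℝ) * (inner ℝ (b i) Gw : ℝ)) := by
      conv_lhs => rw [← b.sum_repr Gw]
      rw [map_sum, inner_sum]
      refine Finset.sum_congr rfl fun i _ => ?_
      rw [map_smul, heig i, smul_smul, real_inner_smul_right, b.repr_apply_apply,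
        real_inner_comm F (b i)]
      ring
    rw [hexp]
    have habs : |∑ i, μ i * ((inner ℝ (b i) F : ℝ) * (inner ℝ (b i) Gw : ℝ))|
        ≤ ∑ i, lam * (|(inner ℝ (b i) F : ℝ)| * |(inner ℝ (b i) Gw : ℝ)|) := by
      refine (Finset.abs_sum_le_sum_abs _ _).trans ?_
      refine Finset.sum_le_sum fun i _ => ?_
      rw [abs_mul, abs_mul]
      exact mul_le_mul_of_nonneg_right (hmu i) (by positivity)
    refine habs.trans ?_
    rw [← Finset.mul_sum]
    refine mul_le_mul_of_nonneg_left ?_ hlam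
    have hF2 : ∑ i, (inner ℝ (b i) F : ℝ) ^ 2 = ‖F‖ ^ 2 := by
      have h := b.sum_inner_mul_inner F F
      rw [← real_inner_self_eq_norm_sq, ← h]
      exact Finset.sum_congr rfl fun i _ => by rw [real_inner_comm F (b i)]; ring
    have hG2 : ∑ i, (inner ℝ (b i) Gw : ℝ) ^ 2 = ‖Gw‖ ^ 2 := by
      have h := b.sum_inner_mul_inner Gw Gw
      rw [← real_inner_self_eq_norm_sq, ← h]
      exact Finset.sum_congr rfl fun i _ => by rw [real_inner_comm Gw (b i)]; ring
    have hcs := Finset.sum_mul_sq_le_sq_mul_sq Finset.univ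
      (fun i => |(inner ℝ (b i) F : ℝ)|) (fun i => |(inner ℝ (b i) Gw : ℝ)|)
    simp only [sq_abs] at hcs
    rw [hF2, hG2] at hcs
    have hnn : (0:ℝ) ≤ ∑ i, |(inner ℝ (b i) F : ℝ)| * |(inner ℝ (b i) Gw : ℝ)| :=
      Finset.sum_nonneg fun i _ => by positivity
    calc ∑ i, |(inner ℝ (b i) F : ℝ)| * |(inner ℝ (b i) Gw : ℝ)|
        = Real.sqrt ((∑ i, |(inner ℝ (b i) F : ℝ)| * |(inner ℝ (b i) Gw : ℝ)|) ^ 2) :=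
          (Real.sqrt_sq hnn).symm
      _ ≤ Real.sqrt (‖F‖ ^ 2 * ‖Gw‖ ^ 2) := Real.sqrt_le_sqrt hcs
      _ = ‖F‖ * ‖Gw‖ := by rw [← mul_pow, Real.sqrt_sq (by positivity)]
  calc |∑ v, ∑ u, (if G.Adj v u then f v * g u else 0)| = |(inner ℝ F (Tr Gw) : ℝ)| := by
        rw [hinner]
    _ ≤ lam * (‖F‖ * ‖Gw‖) := key
    _ = lam * (Real.sqrt (∑ v, f v ^ 2) * Real.sqrt (∑ v, g v ^ 2)) := by rw [hnF, hnG]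

set_option maxHeartbeats 1000000 in
/-- **Expander mixing lemma**. For an `(n,d,λ)`-graph `G` and vertex subsets `X, Y`,
`|e(X,Y) - (d/n)|X||Y|| ≤ λ √(|X||Y|(1 - |X|/n)(1 - |Y|/n))`, where `e(X,Y)` counts
ordered pairs `(x,y) ∈ X × Y` with `xy ∈ E(G)`. -/
theorem expander_mixing_lemma (n d : ℕ) (lam : ℝ) (hlam : 0 ≤ lam)
    {V : Type*} [Fintype V] (G : SimpleGraph V) (hG : IsNDL G n d lam)
    (X Y : Finset V) :
    |(({p : V × V | p.1 ∈ X ∧ p.2 ∈ Y ∧ G.Adj p.1 p.2}.ncard : ℝ)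
        - (d : ℝ) / (n : ℝ) * (X.card : ℝ) * (Y.card : ℝ))| ≤
      lam * Real.sqrt ((X.card : ℝ) * (Y.card : ℝ) *
        (1 - (X.card : ℝ) / (n : ℝ)) * (1 - (Y.card : ℝ) / (n : ℝ))) := by
  classical
  obtain ⟨hn, hreg, hspec⟩ := hG
  -- trivial case n = 0
  rcases Nat.eq_zero_or_pos n with hn0 | hnpos
  · subst hn0
    have : IsEmpty V := Fintype.card_eq_zero_iff.mp hn
    have hX : X = ∅ := Finset.eq_empty_of_isEmpty X
    have hY : Y = ∅ := Finset.eq_empty_of_isEmpty Y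
    have hs : {p : V × V | p.1 ∈ X ∧ p.2 ∈ Y ∧ G.Adj p.1 p.2} = ∅ := by
      ext p; exact (this.false p.1).elim
    rw [hs, hX, hY]
    simp
  have hnR : (0:ℝ) < n := by exact_mod_cast hnpos
  -- notation
  set x : V → ℝ := fun v => if v ∈ X then 1 else 0 with hxdef
  set y : V → ℝ := fun v => if v ∈ Y then 1 else 0 with hydef
  set c1 : ℝ := (X.card : ℝ) / n with hc1
  set c2 : ℝ := (Y.card : ℝ) / n with hc2
  have hsumx : ∑ v, x v = (X.card : ℝ) := by
    rw [hxdef, Finset.sum_boole]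
    congr 1
    exact congrArg Finset.card (by ext v; simp)
  have hsumy : ∑ v, y v = (Y.card : ℝ) := by
    rw [hydef, Finset.sum_boole]
    congr 1
    exact congrArg Finset.card (by ext v; simp)
  have hcard : (Finset.univ : Finset V).card = n := by rw [Finset.card_univ, hn]
  set f : V → ℝ := fun v => x v - c1 with hfdef
  set g : V → ℝ := fun v => y v - c2 with hgdef
  have hf : ∑ v, f v = 0 := by
    rw [hfdef]
    rw [Finset.sum_sub_distrib, hsumx, Finset.sum_const, hcard, nsmul_eq_mul, hc1]
    field_simp
    ring
  have hg : ∑ v, g v = 0 := by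
    rw [hgdef]
    rw [Finset.sum_sub_distrib, hsumy, Finset.sum_const, hcard, nsmul_eq_mul, hc2]
    field_simp
    ring
  -- the edge count as a double sum
  set E : ℝ := ∑ v, ∑ u, (if G.Adj v u then x v * y u else 0) with hEdef
  have hcount : (({p : V × V | p.1 ∈ X ∧ p.2 ∈ Y ∧ G.Adj p.1 p.2}.ncard : ℝ)) = E := by
    have hs : {p : V × V | p.1 ∈ X ∧ p.2 ∈ Y ∧ G.Adj p.1 p.2}
        = ↑(Finset.univ.filter fun p : V × V => p.1 ∈ X ∧ p.2 ∈ Y ∧ G.Adj p.1 p.2) := by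
      ext p; simp
    rw [hs, Set.ncard_coe_finset]
    rw [← Finset.sum_boole]
    push_cast
    rw [← Finset.univ_product_univ, Finset.sum_product]
    refine Finset.sum_congr rfl fun v _ => Finset.sum_congr rfl fun u _ => ?_
    rw [hxdef, hydef]
    by_cases h1 : v ∈ X <;> by_cases h2 : u ∈ Y <;> by_cases h3 : G.Adj v u <;>
      simp [h1, h2, h3]
  -- column/row sums
  have hrow : ∀ v, ∑ u, (if G.Adj v u then (1:ℝ) else 0) = d := by
    intro v
    rw [Finset.sum_boole]
    have : (Finset.univ.filter fun u => G.Adj v u) = G.neighborFinset v := by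
      ext u; simp
    rw [this]; norm_cast; exact hreg v
  have hcol : ∀ u, ∑ v, (if G.Adj v u then (1:ℝ) else 0) = d := by
    intro u
    rw [Finset.sum_boole]
    have : (Finset.univ.filter fun v => G.Adj v u) = G.neighborFinset u := by
      ext v; simp [SimpleGraph.adj_comm]
    rw [this]; norm_cast; exact hreg u
  have hS1 : ∑ v, ∑ u, (if G.Adj v u then y u else 0) = d * (Y.card : ℝ) := by
    rw [Finset.sum_comm]
    calc ∑ u, ∑ v, (if G.Adj v u then y u else 0)
        = ∑ u, (∑ v, if G.Adj v u then (1:ℝ) else 0) * y u := by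
          refine Finset.sum_congr rfl fun u _ => ?_
          rw [Finset.sum_mul]
          exact Finset.sum_congr rfl fun v _ => by split_ifs <;> simp
      _ = ∑ u, (d:ℝ) * y u := by simp_rw [hcol]
      _ = d * (Y.card : ℝ) := by rw [← Finset.mul_sum, hsumy]
  have hS2 : ∑ v, ∑ u, (if G.Adj v u then x v else 0) = d * (X.card : ℝ) := by
    calc ∑ v, ∑ u, (if G.Adj v u then x v else 0)
        = ∑ v, (∑ u, if G.Adj v u then (1:ℝ) else 0) * x v := by
          refine Finset.sum_congr rfl fun v _ => ?_
          rw [Finset.sum_mul]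
          exact Finset.sum_congr rfl fun u _ => by split_ifs <;> simp
      _ = ∑ v, (d:ℝ) * x v := by simp_rw [hrow]
      _ = d * (X.card : ℝ) := by rw [← Finset.mul_sum, hsumx]
  have hS3 : ∑ v, ∑ u, (if G.Adj v u then (1:ℝ) else 0) = n * d := by
    calc ∑ v, ∑ u, (if G.Adj v u then (1:ℝ) else 0) = ∑ v : V, (d:ℝ) := by simp_rw [hrow]
      _ = n * d := by rw [Finset.sum_const, hcard, nsmul_eq_mul]
  -- the centered double sum
  have hsplitpt : ∀ v u, (if G.Adj v u then f v * g u else 0)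
      = (if G.Adj v u then x v * y u else 0) - c1 * (if G.Adj v u then y u else 0)
        - c2 * (if G.Adj v u then x v else 0) + c1 * c2 * (if G.Adj v u then (1:ℝ) else 0) := by
    intro v u
    rw [hfdef, hgdef]
    split_ifs <;> ring
  have hcent : ∑ v, ∑ u, (if G.Adj v u then f v * g u else 0)
      = E - (d:ℝ) / n * (X.card : ℝ) * (Y.card : ℝ) := by
    have h1 : ∑ v, ∑ u, (if G.Adj v u then f v * g u else 0)
        = E - c1 * (d * (Y.card:ℝ)) - c2 * (d * (X.card:ℝ)) + c1 * c2 * (n * d) := by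
      rw [hEdef, ← hS1, ← hS2, ← hS3]
      simp_rw [hsplitpt]
      simp_rw [Finset.sum_add_distrib, Finset.sum_sub_distrib, ← Finset.mul_sum]
    rw [h1, hc1, hc2]
    field_simp
    ring
  -- norms
  have hxsq : ∀ v, x v ^ 2 = x v := by intro v; by_cases h : v ∈ X <;> simp [hxdef, h]
  have hysq : ∀ v, y v ^ 2 = y v := by intro v; by_cases h : v ∈ Y <;> simp [hydef, h]
  have hf2 : ∑ v, f v ^ 2 = (X.card : ℝ) * (1 - (X.card : ℝ) / n) := by
    have : ∀ v, f v ^ 2 = x v - 2 * c1 * x v + c1 ^ 2 := by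
      intro v
      have hfv : f v = x v - c1 := rfl
      have hexp : (x v - c1) ^ 2 = x v ^ 2 - 2 * c1 * x v + c1 ^ 2 := by ring
      rw [hfv, hexp, hxsq v]
    rw [Finset.sum_congr rfl fun v _ => this v]
    rw [Finset.sum_add_distrib, Finset.sum_sub_distrib, hsumx, ← Finset.mul_sum, hsumx,
      Finset.sum_const, hcard, nsmul_eq_mul, hc1]
    field_simp
    ring
  have hg2 : ∑ v, g v ^ 2 = (Y.card : ℝ) * (1 - (Y.card : ℝ) / n) := by
    have : ∀ v, g v ^ 2 = y v - 2 * c2 * y v + c2 ^ 2 := by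
      intro v
      have hgv : g v = y v - c2 := rfl
      have hexp : (y v - c2) ^ 2 = y v ^ 2 - 2 * c2 * y v + c2 ^ 2 := by ring
      rw [hgv, hexp, hysq v]
    rw [Finset.sum_congr rfl fun v _ => this v]
    rw [Finset.sum_add_distrib, Finset.sum_sub_distrib, hsumy, ← Finset.mul_sum, hsumy,
      Finset.sum_const, hcard, nsmul_eq_mul, hc2]
    field_simp
    ring
  have hXle : (X.card : ℝ) / n ≤ 1 := by
    rw [div_le_one hnR]
    have := Finset.card_le_univ X
    rw [hn] at this
    exact_mod_cast this
  have hYle : (Y.card : ℝ) / n ≤ 1 := by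
    rw [div_le_one hnR]
    have := Finset.card_le_univ Y
    rw [hn] at this
    exact_mod_cast this
  have hXnn : (0:ℝ) ≤ (X.card : ℝ) * (1 - (X.card : ℝ) / n) := by
    have : (0:ℝ) ≤ 1 - (X.card : ℝ) / n := by linarith
    positivity
  have hYnn : (0:ℝ) ≤ (Y.card : ℝ) * (1 - (Y.card : ℝ) / n) := by
    have : (0:ℝ) ≤ 1 - (Y.card : ℝ) / n := by linarith
    positivity
  have hbound := bilin_bound G d hlam hreg hspec f g hf hg
  rw [hcent, hf2, hg2] at hbound
  rw [hcount]
  refine hbound.trans (le_of_eq ?_)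
  rw [← Real.sqrt_mul hXnn]
  congr 1
  simp only [hc1, hc2]
  ring

end HamSubsets
end
end

section
/- Let k > 0 and t ≥ 2 be integers. Let G be a graph on more than k vertices such that |N_G(W)| ≥ t for every W ⊆ V(G) with k/2 ≤ |W| ≤ k. Then G contains a cycle of length at least t + 1. -/
open scoped Classical

noncomputable section

namespace HamSubsets

open SimpleGraph

variable {V : Type*}

variable {G : SimpleGraph V}

private lemma aux_append_isPath {a b c : V} {p : G.Walk a b} {q : G.Walk b c}
    (hp : p.IsPath) (hq : q.IsPath)
    (h : ∀ v, v ∈ p.support → v ∈ q.support → v = b) : (p.append q).IsPath := by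
  rw [Walk.isPath_def, Walk.support_append]
  refine List.Nodup.append hp.support_nodup hq.support_nodup.tail ?_
  intro v hv hv'
  have hvq : v ∈ q.support := List.mem_of_mem_tail hv'
  have hvb : v = b := h v hv hvq
  have hnd := hq.support_nodup
  rw [q.support_eq_cons, List.nodup_cons] at hnd
  exact hnd.1 (hvb ▸ hv')

private lemma aux_getVert_append {a b c : V} (p : G.Walk a b) (q : G.Walk b c) :
    (p.append q).getVert p.length = b := by
  induction p with
  | nil => simp
  | cons h p ih => simpa [Walk.getVert_cons_succ] using ih q

private lemma aux_edge_mem_path {u w : V} {r : G.Walk u w} (hr : r.IsPath)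
    (he : s(w, u) ∈ r.edges) : r.length = 1 := by
  cases r with
  | nil => simp at he
  | @cons _ x _ h r' =>
    rw [Walk.edges_cons, List.mem_cons] at he
    rw [Walk.cons_isPath_iff] at hr
    rcases he with he | he
    · rw [Sym2.eq_iff] at he
      rcases he with ⟨hwu, hux⟩ | ⟨hwx, -⟩
      · exact absurd (hwu ▸ r'.end_mem_support) hr.2
      · subst hwx
        have := Walk.isPath_iff_eq_nil.mp hr.1
        subst this
        simp
    · exact absurd (r'.snd_mem_support_of_mem_edges he) hr.2

private lemma lemE {t : ℕ} (ht : 2 ≤ t)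
    (htG : ∀ (v : V) (c : G.Walk v v), c.IsCycle → c.length ≤ t)
    {z y u w : V} (P : G.Walk z y) (hP : P.IsPath) (A : Set V)
    (hPA : ∀ v ∈ P.support, v ∈ A → v = y)
    (hu : u ∉ A) (huP : u ∈ P.support)
    (Q : G.Walk y w) (hQ : Q.IsPath) (hQA : ∀ v ∈ Q.support, v ∈ A)
    (hadj : G.Adj w u) :
    ∃ i, 1 ≤ i ∧ i + Q.length + 1 ≤ t ∧ u = P.reverse.getVert i := by
  classical
  have huR : u ∈ P.reverse.support := by
    rw [Walk.support_reverse, List.mem_reverse]; exact huP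
  set S := P.reverse.takeUntil u huR with hS
  have hSP : S.IsPath := hP.reverse.takeUntil huR
  have hgv : u = P.reverse.getVert S.length := by
    have hspec := P.reverse.take_spec huR
    have := aux_getVert_append S (P.reverse.dropUntil u huR)
    rw [hspec] at this
    exact this.symm
  have hSsupp : ∀ v ∈ S.support, v ∈ P.support := by
    intro v hv
    have := P.reverse.support_takeUntil_subset huR hv
    rwa [Walk.support_reverse, List.mem_reverse] at this
  have hyA : y ∈ A := hQA y Q.start_mem_support
  have hd1 : 1 ≤ S.length := by
    by_contra hcon
    have h0 : S.length = 0 := by omega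
    rw [h0, Walk.getVert_zero] at hgv
    exact hu (hgv ▸ hyA)
  -- the path from u to w
  have hrpath : (S.reverse.append Q).IsPath := by
    refine aux_append_isPath hSP.reverse hQ ?_
    intro v hv hv'
    rw [Walk.support_reverse, List.mem_reverse] at hv
    exact hPA v (hSsupp v hv) (hQA v hv')
  have hrlen : (S.reverse.append Q).length = S.length + Q.length := by
    rw [Walk.length_append, Walk.length_reverse]
  refine ⟨S.length, hd1, ?_, hgv⟩
  by_cases he : s(w, u) ∈ (S.reverse.append Q).edges
  · have := aux_edge_mem_path hrpath he
    omega
  · have hcyc : (Walk.cons hadj (S.reverse.append Q)).IsCycle :=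
      (Walk.cons_isCycle_iff _ hadj).mpr ⟨hrpath, he⟩
    have := htG w _ hcyc
    rw [Walk.length_cons, hrlen] at this
    omega

private lemma count_aux (S : Set V) (g : ℕ → V) (D : ℕ)
    (h : ∀ v ∈ S, ∃ i ≤ D, v = g i) : S.ncard ≤ D + 1 := by
  have hsub : S ⊆ ↑((Finset.Iic D).image g) := by
    intro v hv
    obtain ⟨i, hi, rfl⟩ := h v hv
    simp only [Finset.coe_image, Set.mem_image, Finset.mem_coe, Finset.mem_Iic]
    exact ⟨i, hi, rfl⟩
  calc S.ncard ≤ (↑((Finset.Iic D).image g) : Set V).ncard :=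
        Set.ncard_le_ncard hsub (Set.toFinite _)
    _ = ((Finset.Iic D).image g).card := Set.ncard_coe_finset _
    _ ≤ (Finset.Iic D).card := Finset.card_image_le
    _ = D + 1 := Nat.card_Iic D

private lemma helperD (m : ℕ) (hm : 1 ≤ m) (C : Finset (Finset V))
    (hsmall : ∀ s ∈ C, 2 * s.card < m)
    (htot : m ≤ 2 * (C.biUnion id).card) :
    ∃ D ⊆ C, m ≤ 2 * (D.biUnion id).card ∧ (D.biUnion id).card ≤ m := by
  classical
  induction C using Finset.strongInduction with
  | _ C ih =>
    rcases C.eq_empty_or_nonempty with rfl | ⟨s, hs⟩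
    · simp at htot; omega
    · by_cases h : m ≤ 2 * ((C.erase s).biUnion id).card
      · obtain ⟨D, hD, h1, h2⟩ := ih (C.erase s) (C.erase_ssubset hs)
          (fun x hx => hsmall x (C.erase_subset s hx)) h
        exact ⟨D, hD.trans (C.erase_subset s), h1, h2⟩
      · refine ⟨C, subset_rfl, htot, ?_⟩
        have hins : C = insert s (C.erase s) := (C.insert_erase hs).symm
        have hle : (C.biUnion id).card ≤ s.card + ((C.erase s).biUnion id).card := by
          calc (C.biUnion id).card = ((insert s (C.erase s)).biUnion id).card := by rw [← hins]
            _ = (s ∪ (C.erase s).biUnion id).card := by rw [Finset.biUnion_insert]; rfl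
            _ ≤ _ := Finset.card_union_le _ _
        have := hsmall s hs
        omega

private lemma lemC {t : ℕ} (ht : 2 ≤ t)
    (htG : ∀ (v : V) (c : G.Walk v v), c.IsCycle → c.length ≤ t) :
    ∀ (n : ℕ) (A : Finset V), A.card ≤ n →
    ∀ (z y : V) (P : G.Walk z y), P.IsPath →
    (∀ v ∈ P.support, v ∈ A → v = y) →
    (∀ a ∈ A, ∃ w : G.Walk y a, ∀ v ∈ w.support, v ∈ A) →
    (∀ u a, u ∉ A → a ∈ A → G.Adj a u → u ∈ P.support) →
    ∀ m, 1 ≤ m → m ≤ A.card →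
    ∃ W : Finset V, W ⊆ A ∧ m ≤ 2 * W.card ∧ W.card ≤ m ∧
      (extNbhd G (W : Set V)).ncard ≤ t - 1 := by
  intro n
  induction n with
  | zero =>
    intro A hA z y P hP hPA hconn hext m hm hmA
    omega
  | succ n ih =>
    intro A hAcard z y P hP hPA hconn hext m hm hmA
    have hyA : y ∈ A := by
      obtain ⟨a, haA⟩ := Finset.card_pos.mp (by omega : 0 < A.card)
      obtain ⟨w, hw⟩ := hconn a haA
      exact hw y w.start_mem_support
    have hPAset : ∀ v ∈ P.support, v ∈ (↑A : Set V) → v = y := fun v hv hvA =>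
      hPA v hv (Finset.mem_coe.mp hvA)
    by_cases hcase : A.card ≤ m
    · -- W = A
      refine ⟨A, subset_rfl, by omega, hcase, ?_⟩
      have hB := count_aux (extNbhd G (↑A : Set V))
        (fun j => P.reverse.getVert (j + 1)) (t - 2) ?_
      · omega
      · intro v hv
        simp only [extNbhd, Set.mem_setOf_eq] at hv
        obtain ⟨hvA, b, hbA, hadj⟩ := hv
        have hvA' : v ∉ A := fun h => hvA (Finset.mem_coe.mpr h)
        have hbA' : b ∈ A := Finset.mem_coe.mp hbA
        obtain ⟨w0, hw0⟩ := hconn b hbA'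
        obtain ⟨i, hi1, hit, hieq⟩ := lemE ht htG P hP (↑A) hPAset hvA'
          (hext v b hvA' hbA' hadj) w0.bypass w0.bypass_isPath
          (fun x hx => Finset.mem_coe.mpr (hw0 x (w0.support_bypass_subset hx))) hadj
        refine ⟨i - 1, by omega, ?_⟩
        beta_reduce
        rw [Nat.sub_add_cancel hi1]
        exact hieq
    · push_neg at hcase
      set A' := A.erase y with hA'def
      have hA'card : A'.card = A.card - 1 := Finset.card_erase_of_mem hyA
      set K : V → Finset V :=
        fun a => A'.filter (fun b => ∃ w : G.Walk a b, ∀ v ∈ w.support, v ∈ A') with hKdef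
      have hKmem : ∀ a b : V,
          b ∈ K a ↔ b ∈ A' ∧ ∃ w : G.Walk a b, ∀ v ∈ w.support, v ∈ A' := by
        intro a b; simp [hKdef, Finset.mem_filter]
      have hKself : ∀ a ∈ A', a ∈ K a := by
        intro a ha
        refine (hKmem a a).mpr ⟨ha, Walk.nil, ?_⟩
        intro v hv
        rw [Walk.support_nil, List.mem_singleton] at hv
        exact hv ▸ ha
      have hKsub : ∀ a, K a ⊆ A' := fun a => Finset.filter_subset _ _
      have hKwalk : ∀ (a b : V) (w : G.Walk a b), (∀ v ∈ w.support, v ∈ A') →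
          ∀ v ∈ w.support, v ∈ K a := by
        intro a b w hw v hv
        exact (hKmem a v).mpr ⟨hw v hv, w.takeUntil v hv,
          fun x hx => hw x (w.support_takeUntil_subset hv hx)⟩
      have hKcons : ∀ a b c : V, b ∈ K a → c ∈ A' → G.Adj b c → c ∈ K a := by
        intro a b c hb hc hadj
        obtain ⟨hbA, w, hw⟩ := (hKmem a b).mp hb
        refine (hKmem a c).mpr ⟨hc, w.append (Walk.cons hadj Walk.nil), ?_⟩
        intro v hv
        rw [Walk.mem_support_append_iff] at hv
        rcases hv with hv | hv
        · exact hw v hv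
        · rw [Walk.support_cons, Walk.support_nil] at hv
          simp only [List.mem_cons, List.mem_singleton, List.not_mem_nil, or_false] at hv
          rcases hv with rfl | rfl
          · exact hKsub a hb
          · exact hc
      have hKeq : ∀ a b : V, b ∈ K a → K a = K b := by
        intro a b hb
        obtain ⟨hbA, w, hw⟩ := (hKmem a b).mp hb
        ext c
        constructor
        · intro hc
          obtain ⟨hcA, w', hw'⟩ := (hKmem a c).mp hc
          refine (hKmem b c).mpr ⟨hcA, w.reverse.append w', ?_⟩
          intro v hv
          rw [Walk.mem_support_append_iff] at hv
          rcases hv with hv | hv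
          · rw [Walk.support_reverse, List.mem_reverse] at hv; exact hw v hv
          · exact hw' v hv
        · intro hc
          obtain ⟨hcA, w', hw'⟩ := (hKmem b c).mp hc
          refine (hKmem a c).mpr ⟨hcA, w.append w', ?_⟩
          intro v hv
          rw [Walk.mem_support_append_iff] at hv
          rcases hv with hv | hv
          · exact hw v hv
          · exact hw' v hv
      have hroot : ∀ a ∈ A', ∃ c, c ∈ K a ∧ G.Adj y c := by
        intro a ha
        obtain ⟨w0, hw0⟩ := hconn a (Finset.mem_of_mem_erase ha)
        have hay : y ≠ a := fun h => (Finset.ne_of_mem_erase ha) h.symm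
        have hnn : ¬ w0.bypass.Nil := Walk.not_nil_of_ne hay
        obtain ⟨c, hadj, p', hp'⟩ := Walk.not_nil_iff.mp hnn
        have hppath := w0.bypass_isPath
        rw [hp', Walk.cons_isPath_iff] at hppath
        have hp'supp : ∀ v ∈ p'.support, v ∈ A' := by
          intro v hv
          refine Finset.mem_erase.mpr ⟨fun h => hppath.2 (h ▸ hv), ?_⟩
          have : v ∈ w0.bypass.support := by
            rw [hp', Walk.support_cons]; exact List.mem_cons_of_mem _ hv
          exact hw0 v (w0.support_bypass_subset this)
        have haKc : a ∈ K c := hKwalk c a p' hp'supp a p'.end_mem_support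
        have hcKc : c ∈ K c := hKself c (hp'supp c p'.start_mem_support)
        exact ⟨c, (hKeq c a haKc) ▸ hcKc, hadj⟩
      have hrootconn : ∀ a ∈ A', ∀ c ∈ K a, ∀ b ∈ K a,
          ∃ w : G.Walk c b, ∀ v ∈ w.support, v ∈ K a := by
        intro a ha c hc b hb
        obtain ⟨_, wc, hwc⟩ := (hKmem a c).mp hc
        obtain ⟨_, wb, hwb⟩ := (hKmem a b).mp hb
        refine ⟨wc.reverse.append wb, ?_⟩
        intro v hv
        rw [Walk.mem_support_append_iff] at hv
        rcases hv with hv | hv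
        · rw [Walk.support_reverse, List.mem_reverse] at hv
          exact hKwalk a c wc hwc v hv
        · exact hKwalk a b wb hwb v hv
      have hclass : ∀ a ∈ A', ∀ b ∈ K a, ∀ v, v ∉ A → G.Adj b v →
          ∃ i, 1 ≤ i ∧ i + 2 ≤ t ∧ v = P.reverse.getVert i := by
        intro a ha b hb v hvA hadj
        obtain ⟨c, hcK, hyc⟩ := hroot a ha
        obtain ⟨wcb, hwcb⟩ := hrootconn a ha c hcK b hb
        set q := wcb.bypass with hqdef
        have hqsupp : ∀ x ∈ q.support, x ∈ A' := fun x hx =>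
          hKsub a (hwcb x (wcb.support_bypass_subset hx))
        have hyq : y ∉ q.support := fun h => (Finset.notMem_erase y A) (hqsupp y h)
        have hQpath : (Walk.cons hyc q).IsPath :=
          (Walk.cons_isPath_iff _ _).mpr ⟨wcb.bypass_isPath, hyq⟩
        have hQsupp : ∀ x ∈ (Walk.cons hyc q).support, x ∈ (↑A : Set V) := by
          intro x hx
          rw [Walk.support_cons, List.mem_cons] at hx
          rcases hx with rfl | hx
          · exact Finset.mem_coe.mpr hyA
          · exact Finset.mem_coe.mpr (Finset.mem_of_mem_erase (hqsupp x hx))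
        obtain ⟨i, h1, h2, h3⟩ := lemE ht htG P hP (↑A) hPAset hvA
          (hext v b hvA (Finset.mem_of_mem_erase (hKsub a hb)) hadj)
          (Walk.cons hyc q) hQpath hQsupp hadj
        rw [Walk.length_cons] at h2
        exact ⟨i, h1, by omega, h3⟩
      have hcount : ∀ W : Finset V,
          (∀ v ∈ extNbhd G (↑W : Set V), v = y ∨
            ∃ i, 1 ≤ i ∧ i + 2 ≤ t ∧ v = P.reverse.getVert i) →
          (extNbhd G (↑W : Set V)).ncard ≤ t - 1 := by
        intro W h
        have hB := count_aux (extNbhd G (↑W : Set V))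
          (fun j => if j = 0 then y else P.reverse.getVert j) (t - 2) ?_
        · omega
        · intro v hv
          rcases h v hv with rfl | ⟨i, h1, h2, h3⟩
          · exact ⟨0, by omega, by simp⟩
          · refine ⟨i, by omega, ?_⟩
            simp only [if_neg (by omega : ¬ i = 0)]
            exact h3
      by_cases hbig : ∃ a ∈ A', m < (K a).card
      · -- recurse into a big component
        obtain ⟨a, ha, hKa⟩ := hbig
        obtain ⟨c, hcK, hyc⟩ := hroot a ha
        have hKac : K a = K c := hKeq a c hcK
        have hcA' : c ∈ A' := hKsub a hcK
        have hcy : c ≠ y := Finset.ne_of_mem_erase hcA'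
        have hcP : c ∉ P.support := fun h => hcy (hPA c h (Finset.mem_of_mem_erase hcA'))
        have hconsPath : (Walk.cons hyc (Walk.nil : G.Walk c c)).IsPath := by
          rw [Walk.cons_isPath_iff]
          exact ⟨Walk.IsPath.nil, by simp [hyc.ne]⟩
        have hP'path : (P.append (Walk.cons hyc Walk.nil)).IsPath := by
          refine aux_append_isPath hP hconsPath ?_
          intro v hv hv'
          rw [Walk.support_cons, Walk.support_nil] at hv'
          simp only [List.mem_cons, List.mem_singleton, List.not_mem_nil, or_false] at hv'
          rcases hv' with rfl | rfl
          · rfl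
          · exact absurd hv hcP
        have hsuppP' : ∀ v, v ∈ (P.append (Walk.cons hyc Walk.nil)).support ↔
            v ∈ P.support ∨ v = c := by
          intro v
          rw [Walk.mem_support_append_iff, Walk.support_cons, Walk.support_nil]
          simp only [List.mem_cons, List.mem_singleton, List.not_mem_nil, or_false]
          constructor
          · rintro (hv | rfl | rfl)
            · exact Or.inl hv
            · exact Or.inl P.end_mem_support
            · exact Or.inr rfl
          · rintro (hv | rfl)
            · exact Or.inl hv
            · exact Or.inr (Or.inr rfl)
        obtain ⟨W, hWsub, h1, h2, h3⟩ := ih (K c) (by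
            have hcc := Finset.card_le_card (hKsub c)
            rw [hA'card] at hcc
            omega) z c (P.append (Walk.cons hyc Walk.nil)) hP'path
          (by
            intro v hv hvK
            rw [hsuppP' v] at hv
            rcases hv with hv | rfl
            · exfalso
              have hvA' : v ∈ A' := hKsub c hvK
              have hvy := hPA v hv (Finset.mem_of_mem_erase hvA')
              rw [hvy] at hvA'
              exact Finset.notMem_erase y A hvA'
            · rfl)
          (by
            intro b hb
            obtain ⟨w, hw⟩ := hrootconn a ha c hcK b (by rw [← hKac] at hb; exact hb)
            exact ⟨w, fun v hv => by rw [← hKac]; exact hw v hv⟩)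
          (by
            intro u b hu hb hadj
            rw [hsuppP' u]
            by_cases huA : u ∈ A
            · by_cases huy : u = y
              · exact Or.inl (huy ▸ P.end_mem_support)
              · exact absurd (hKcons c b u hb (Finset.mem_erase.mpr ⟨huy, huA⟩) hadj) hu
            · exact Or.inl (hext u b huA (Finset.mem_of_mem_erase (hKsub c hb)) hadj))
          m hm (by rw [← hKac]; omega)
        exact ⟨W, hWsub.trans ((hKsub c).trans (A.erase_subset y)), h1, h2, h3⟩
      · push_neg at hbig
        by_cases hmed : ∃ a ∈ A', m ≤ 2 * (K a).card
        · obtain ⟨a, ha, h2⟩ := hmed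
          refine ⟨K a, (hKsub a).trans (A.erase_subset y), h2, hbig a ha, hcount (K a) ?_⟩
          intro v hv
          simp only [extNbhd, Set.mem_setOf_eq] at hv
          obtain ⟨hvK, b, hbK, hadj⟩ := hv
          have hbK' : b ∈ K a := Finset.mem_coe.mp hbK
          by_cases hvA : v ∈ A
          · by_cases hvy : v = y
            · exact Or.inl hvy
            · exact absurd (Finset.mem_coe.mpr
                (hKcons a b v hbK' (Finset.mem_erase.mpr ⟨hvy, hvA⟩) hadj)) hvK
          · exact Or.inr (hclass a ha b hbK' v hvA hadj)
        · push_neg at hmed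
          obtain ⟨D, hD, h1, h2⟩ := helperD m hm (A'.image K) (by
              intro s hs
              obtain ⟨a, ha, rfl⟩ := Finset.mem_image.mp hs
              exact hmed a ha)
            (by
              have hcup : (A'.image K).biUnion id = A' := by
                ext v
                simp only [Finset.mem_biUnion, Finset.mem_image, id]
                constructor
                · rintro ⟨s, ⟨a, ha, rfl⟩, hv⟩
                  exact hKsub a hv
                · intro hv
                  exact ⟨K v, ⟨v, hv, rfl⟩, hKself v hv⟩
              rw [hcup]
              omega)
          have hWsub : D.biUnion id ⊆ A' := by
            intro x hx
            obtain ⟨s, hs, hxs⟩ := Finset.mem_biUnion.mp hx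
            obtain ⟨a, ha, rfl⟩ := Finset.mem_image.mp (hD hs)
            exact hKsub a hxs
          refine ⟨D.biUnion id, hWsub.trans (A.erase_subset y), h1, h2, hcount _ ?_⟩
          intro v hv
          simp only [extNbhd, Set.mem_setOf_eq] at hv
          obtain ⟨hvW, b, hbW, hadj⟩ := hv
          obtain ⟨s, hsD, hbs⟩ := Finset.mem_biUnion.mp (Finset.mem_coe.mp hbW)
          obtain ⟨a, ha, rfl⟩ := Finset.mem_image.mp (hD hsD)
          by_cases hvA : v ∈ A
          · by_cases hvy : v = y
            · exact Or.inl hvy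
            · refine absurd ?_ hvW
              refine Finset.mem_coe.mpr (Finset.mem_biUnion.mpr ⟨K a, hsD, ?_⟩)
              exact hKcons a b v hbs (Finset.mem_erase.mpr ⟨hvy, hvA⟩) hadj
          · exact Or.inr (hclass a ha b hbs v hvA hadj)

/-- **Lemma (Krivelevich)**. Let `k > 0` and `t ≥ 2` be integers. If `G` has more than `k`
vertices and `|N_G(W)| ≥ t` for every `W ⊆ V(G)` with `k/2 ≤ |W| ≤ k`, then `G` contains
a cycle of length at least `t + 1`. -/
theorem long_cycle_of_expansion (k t : ℕ) (hk : 0 < k) (ht : 2 ≤ t)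
    {V : Type*} [Fintype V] (G : SimpleGraph V) (hcard : k < Fintype.card V)
    (hexp : ∀ W : Set V, (k : ℝ) / 2 ≤ (W.ncard : ℝ) → W.ncard ≤ k →
      t ≤ (extNbhd G W).ncard) :
    ∃ (v : V) (c : G.Walk v v), c.IsCycle ∧ t + 1 ≤ c.length := by
  classical
  by_contra hno
  push_neg at hno
  have htG : ∀ (v : V) (c : G.Walk v v), c.IsCycle → c.length ≤ t := by
    intro v c hc
    have := hno v c hc
    omega
  have hexpW : ∀ W : Finset V, k ≤ 2 * W.card → W.card ≤ k →
      t ≤ (extNbhd G (↑W : Set V)).ncard := by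
    intro W h1 h2
    have hW : (↑W : Set V).ncard = W.card := Set.ncard_coe_finset W
    refine hexp (↑W) ?_ (by rw [hW]; exact h2)
    rw [hW, div_le_iff₀ (by norm_num : (0:ℝ) < 2)]
    have : (k:ℝ) ≤ 2 * (W.card:ℝ) := by exact_mod_cast h1
    linarith
  set K : V → Finset V :=
    fun a => Finset.univ.filter (fun b => Nonempty (G.Walk a b)) with hKdef
  have hKmem : ∀ a b : V, b ∈ K a ↔ Nonempty (G.Walk a b) := by
    intro a b; simp [hKdef]
  have hKself : ∀ a : V, a ∈ K a := fun a => (hKmem a a).mpr ⟨Walk.nil⟩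
  have hKcons : ∀ a b c : V, b ∈ K a → G.Adj b c → c ∈ K a := by
    intro a b c hb hadj
    obtain ⟨w⟩ := (hKmem a b).mp hb
    exact (hKmem a c).mpr ⟨w.append (Walk.cons hadj Walk.nil)⟩
  have hKeq : ∀ a b : V, b ∈ K a → K a = K b := by
    intro a b hb
    obtain ⟨w⟩ := (hKmem a b).mp hb
    ext c
    constructor
    · intro hc
      obtain ⟨w'⟩ := (hKmem a c).mp hc
      exact (hKmem b c).mpr ⟨w.reverse.append w'⟩
    · intro hc
      obtain ⟨w'⟩ := (hKmem b c).mp hc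
      exact (hKmem a c).mpr ⟨w.append w'⟩
  have hKconn : ∀ a : V, ∀ b ∈ K a, ∃ w : G.Walk a b, ∀ v ∈ w.support, v ∈ K a := by
    intro a b hb
    obtain ⟨w⟩ := (hKmem a b).mp hb
    exact ⟨w, fun v hv => (hKmem a v).mpr ⟨w.takeUntil v hv⟩⟩
  by_cases hbig : ∃ a : V, k ≤ (K a).card
  · obtain ⟨a, hka⟩ := hbig
    obtain ⟨W, hWsub, h1, h2, h3⟩ := lemC ht htG (Fintype.card V) (K a)
      (by simpa using Finset.card_le_univ (K a)) a a (Walk.nil : G.Walk a a)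
      Walk.IsPath.nil
      (by intro v hv _; rw [Walk.support_nil, List.mem_singleton] at hv; exact hv)
      (hKconn a)
      (by intro u b hu hb hadj; exact absurd (hKcons a b u hb hadj) hu)
      k hk hka
    have := hexpW W h1 h2
    omega
  · push_neg at hbig
    by_cases hmed : ∃ a : V, k ≤ 2 * (K a).card
    · obtain ⟨a, hka⟩ := hmed
      have hext0 : extNbhd G (↑(K a) : Set V) = ∅ := by
        ext v
        simp only [extNbhd, Set.mem_setOf_eq, Set.mem_empty_iff_false, iff_false, not_and]
        intro hv
        rintro ⟨b, hb, hadj⟩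
        exact hv (Finset.mem_coe.mpr (hKcons a b v (Finset.mem_coe.mp hb) hadj))
      have := hexpW (K a) hka (le_of_lt (hbig a))
      rw [hext0, Set.ncard_empty] at this
      omega
    · push_neg at hmed
      obtain ⟨D, hD, h1, h2⟩ := helperD k hk (Finset.univ.image K)
        (by
          intro s hs
          obtain ⟨a, _, rfl⟩ := Finset.mem_image.mp hs
          exact hmed a)
        (by
          have hcup : (Finset.univ.image K).biUnion id = Finset.univ := by
            ext v
            simp only [Finset.mem_biUnion, Finset.mem_image, id, Finset.mem_univ, iff_true]
            exact ⟨K v, ⟨v, trivial, rfl⟩, hKself v⟩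
          rw [hcup, Finset.card_univ]
          omega)
      have hext0 : extNbhd G (↑(D.biUnion id) : Set V) = ∅ := by
        ext v
        simp only [extNbhd, Set.mem_setOf_eq, Set.mem_empty_iff_false, iff_false, not_and]
        intro hv
        rintro ⟨b, hb, hadj⟩
        obtain ⟨s, hsD, hbs⟩ := Finset.mem_biUnion.mp (Finset.mem_coe.mp hb)
        obtain ⟨a, _, rfl⟩ := Finset.mem_image.mp (hD hsD)
        refine hv (Finset.mem_coe.mpr (Finset.mem_biUnion.mpr ⟨K a, hsD, ?_⟩))
        exact hKcons a b v hbs hadj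
      have := hexpW (D.biUnion id) h1 h2
      rw [hext0, Set.ncard_empty] at this
      omega


end HamSubsets
end
end
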